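/- arXiv:1301.0102 — 4 statements merged into one kernel-verified Lean document; each statement's English description precedes it below -/
import Mathlib

section
/- Let G be a connected, locally finite simple Ricci-flat graph with girth g(G) ≥ 6. Then every vertex of G has degree 2; consequently G is isomorphic either to the two-way infinite path (the graph on ℤ with i adjacent to j iff |i − j| = 1) or to the cycle C_n for some n ≥ 6. -/
open Filter Topology Classical

noncomputable section

namespace RicciFlatPaper

variable {V : Type*}

/-- Degree as the natural cardinality of the neighbor set. -/
def deg (G : SimpleGraph V) (x : V) : ℕ := (G.neighborSet x).ncard

/-- The probability measure `m_x^α`: mass `α` at `x`, mass `(1-α)/d_x` at each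
neighbor of `x`, and `0` elsewhere. -/
def mass (G : SimpleGraph V) (α : ℝ) (x : V) : V → ℝ :=
  fun v => if v = x then α else if G.Adj x v then (1 - α) / (deg G x) else 0

/-- `A` is a (finitely supported, nonnegative) coupling between `m₁` and `m₂`. -/
def IsCoupling (m₁ m₂ : V → ℝ) (A : V → V → ℝ) : Prop :=
  (∀ u v, 0 ≤ A u v) ∧
  (Function.support (fun p : V × V => A p.1 p.2)).Finite ∧
  (∀ u, ∑ᶠ v, A u v = m₁ u) ∧ (∀ v, ∑ᶠ u, A u v = m₂ v)

/-- The transportation (Wasserstein) distance between two distributions,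
with respect to the graph distance of `G`. -/
def W (G : SimpleGraph V) (m₁ m₂ : V → ℝ) : ℝ :=
  sInf {c | ∃ A : V → V → ℝ, IsCoupling m₁ m₂ A ∧
    c = ∑ᶠ p : V × V, A p.1 p.2 * (G.dist p.1 p.2 : ℝ)}

/-- `κ_α(x,y) = 1 - W(m_x^α, m_y^α)`. -/
def kappaAlpha (G : SimpleGraph V) (α : ℝ) (x y : V) : ℝ :=
  1 - W G (mass G α x) (mass G α y)

/-- Lin–Lu–Yau Ricci curvature `κ(x,y) = lim_{α→1} κ_α(x,y)/(1-α)`. -/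
def ricci (G : SimpleGraph V) (x y : V) : ℝ :=
  limUnder (𝓝[<] (1 : ℝ)) (fun α => kappaAlpha G α x y / (1 - α))

/-- A graph is Ricci-flat if the Ricci curvature vanishes on every edge. -/
def RicciFlat (G : SimpleGraph V) : Prop := ∀ x y : V, G.Adj x y → ricci G x y = 0

/-- The edge `xy` lies on a cycle of length `n`. -/
def EdgeInCycleOfLength (G : SimpleGraph V) (x y : V) (n : ℕ) : Prop :=
  ∃ (v : V) (c : G.Walk v v), c.IsCycle ∧ c.length = n ∧ s(x, y) ∈ c.edges

/-- The two-way infinite path on `ℤ`: `i` adjacent to `j` iff `|i - j| = 1`. -/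
def infinitePath : SimpleGraph ℤ where
  Adj i j := |i - j| = 1
  symm := ⟨fun i j h => by simpa [abs_sub_comm] using h⟩
  loopless := ⟨fun i h => by simp at h⟩

/-- The cycle graph `C_n` on `n` vertices (for `n ≥ 3`). -/
def cycleGraph (n : ℕ) : SimpleGraph (ZMod n) :=
  SimpleGraph.fromRel (fun i j => i - j = 1)

/-- The Petersen graph as the Kneser graph on 2-subsets of a 5-set. -/
def petersen : SimpleGraph {s : Finset (Fin 5) // s.card = 2} where
  Adj a b := Disjoint a.1 b.1
  symm := ⟨fun a b h => h.symm⟩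
  loopless := ⟨fun a h => by
    have h2 := a.2
    rw [disjoint_self] at h
    rw [h] at h2
    simp at h2⟩

/-- The dodecahedral graph (1-skeleton of the regular dodecahedron), realized
as the generalized Petersen graph GP(10,2): an outer 10-cycle `inl i`,
inner vertices `inr i` joined by steps of 2, and spokes `inl i — inr i`. -/
def dodecahedral : SimpleGraph (Fin 10 ⊕ Fin 10) :=
  SimpleGraph.fromRel (fun a b =>
    match a, b with
    | .inl i, .inl j => j = i + 1
    | .inr i, .inr j => j = i + 2
    | .inl i, .inr j => i = j
    | _, _ => False)

/-- The half-dodecahedral graph: one pentagonal face of the dodecahedron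
together with its five neighboring faces.  The three `Fin 5` layers are:
the central pentagon `a_i`, the middle vertices `b_i`, and the outer
(degree-two) vertices `c_i`; the six pentagonal faces are the central one
`a_0…a_4` and, for each `i`, the pentagon `a_i, a_{i+1}, b_{i+1}, c_i, b_i`. -/
def halfDodecahedral : SimpleGraph (Fin 5 ⊕ Fin 5 ⊕ Fin 5) :=
  SimpleGraph.fromRel (fun a b =>
    match a, b with
    | .inl i, .inl j => j = i + 1
    | .inl i, .inr (.inl j) => i = j
    | .inr (.inl i), .inr (.inr j) => j = i ∨ i = j + 1
    | _, _ => False)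

section Aux
open SimpleGraph

section Mass

variable (G : SimpleGraph V) [G.LocallyFinite]

lemma deg_eq_degree (x : V) : deg G x = G.degree x := by
  rw [deg, Set.ncard_eq_toFinset_card']
  rfl

variable {G}

lemma mass_self (α : ℝ) (x : V) : mass G α x x = α := by simp [mass]

lemma mass_adj {α : ℝ} {x u : V} (h : G.Adj x u) :
    mass G α x u = (1 - α) / (deg G x) := by
  have : u ≠ x := fun h' => absurd (h' ▸ h) G.irrefl
  simp [mass, this, h]

lemma mass_eq_zero {α : ℝ} {x u : V} (h1 : u ≠ x) (h2 : ¬ G.Adj x u) :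
    mass G α x u = 0 := by simp [mass, h1, h2]

lemma mass_support {α : ℝ} {x u : V} (h : mass G α x u ≠ 0) :
    u = x ∨ G.Adj x u := by
  by_contra hc
  push_neg at hc
  exact h (mass_eq_zero hc.1 hc.2)

lemma mass_nonneg {α : ℝ} (h0 : 0 ≤ α) (h1 : α ≤ 1) (x u : V) : 0 ≤ mass G α x u := by
  unfold mass
  split_ifs with h h'
  · exact h0
  · exact div_nonneg (by linarith) (by positivity)
  · exact le_refl 0

lemma sum_mass_neighbors {α : ℝ} {x : V} (hx : 1 ≤ deg G x) :
    ∑ u ∈ G.neighborFinset x, mass G α x u = 1 - α := by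
  have hcard : (G.neighborFinset x).card = deg G x := (deg_eq_degree G x).symm
  have h0 : (deg G x : ℝ) ≠ 0 := Nat.cast_ne_zero.mpr (by omega)
  calc ∑ u ∈ G.neighborFinset x, mass G α x u
      = ∑ u ∈ G.neighborFinset x, (1 - α) / (deg G x) := by
        refine Finset.sum_congr rfl fun u hu => ?_
        exact mass_adj (by simpa using hu)
    _ = (G.neighborFinset x).card * ((1 - α) / (deg G x)) := by
        rw [Finset.sum_const, nsmul_eq_mul]
    _ = 1 - α := by rw [hcard]; field_simp

lemma finsum_mul_mass (f : V → ℝ) (α : ℝ) (x : V) :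
    ∑ᶠ u, f u * mass G α x u
      = f x * α + ∑ u ∈ G.neighborFinset x, f u * ((1 - α) / (deg G x)) := by
  have hsub : Function.support (fun u => f u * mass G α x u)
      ⊆ ↑(insert x (G.neighborFinset x)) := by
    intro u hu
    have hm : mass G α x u ≠ 0 := by
      intro h0; simp [Function.mem_support, h0] at hu
    rcases mass_support hm with h | h
    · simp [h]
    · simp [h]
  rw [finsum_eq_sum_of_support_subset _ hsub,
    Finset.sum_insert (by simp), mass_self]
  congr 1
  refine Finset.sum_congr rfl fun u hu => ?_
  rw [mass_adj (by simpa using hu)]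

end Mass

section Girth
open SimpleGraph
variable {G : SimpleGraph V}

lemma girth_le_of_isCycle {v : V} {c : G.Walk v v} (hc : c.IsCycle) :
    G.girth ≤ c.length := by
  have h1 : G.egirth ≤ c.length :=
    iInf_le_of_le v (iInf_le_of_le c (iInf_le_of_le hc le_rfl))
  have := ENat.toNat_le_toNat h1 (by simp)
  simpa [SimpleGraph.girth] using this

lemma no_triangle (hg : 6 ≤ G.girth) {a b c : V} (h1 : G.Adj a b) (h2 : G.Adj b c)
    (h3 : G.Adj c a) : False := by
  have hcyc : (Walk.cons h1 (Walk.cons h2 (Walk.cons h3 Walk.nil))).IsCycle := by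
    simp [Walk.isCycle_def, Walk.isTrail_def, List.Nodup, h1.ne, h2.ne, h3.ne, h1.ne',
      h2.ne', h3.ne', Sym2.eq, Sym2.rel_iff]
  have := girth_le_of_isCycle hcyc
  simp only [Walk.length_cons, Walk.length_nil] at this
  omega

lemma no_square (hg : 6 ≤ G.girth) {a b c d : V} (h1 : G.Adj a b) (h2 : G.Adj b c)
    (h3 : G.Adj c d) (h4 : G.Adj d a) (hac : a ≠ c) (hbd : b ≠ d) : False := by
  have hcyc : (Walk.cons h1 (Walk.cons h2 (Walk.cons h3 (Walk.cons h4 Walk.nil)))).IsCycle := by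
    simp [Walk.isCycle_def, Walk.isTrail_def, List.Nodup, h1.ne, h2.ne, h3.ne, h4.ne,
      h1.ne', h2.ne', h3.ne', h4.ne', hac, hbd, hac.symm, hbd.symm, Sym2.eq, Sym2.rel_iff]
  have := girth_le_of_isCycle hcyc
  simp only [Walk.length_cons, Walk.length_nil] at this
  omega

lemma no_pentagon (hg : 6 ≤ G.girth) {a b c d e : V} (h1 : G.Adj a b) (h2 : G.Adj b c)
    (h3 : G.Adj c d) (h4 : G.Adj d e) (h5 : G.Adj e a)
    (hac : a ≠ c) (had : a ≠ d) (hbd : b ≠ d) (hbe : b ≠ e) (hce : c ≠ e) : False := by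
  have hcyc : (Walk.cons h1 (Walk.cons h2 (Walk.cons h3 (Walk.cons h4
      (Walk.cons h5 Walk.nil))))).IsCycle := by
    simp [Walk.isCycle_def, Walk.isTrail_def, List.Nodup, h1.ne, h2.ne, h3.ne, h4.ne, h5.ne,
      h1.ne', h2.ne', h3.ne', h4.ne', h5.ne', hac, hbd, had, hbe, hce,
      hac.symm, hbd.symm, had.symm, hbe.symm, hce.symm, Sym2.eq, Sym2.rel_iff]
  have := girth_le_of_isCycle hcyc
  simp only [Walk.length_cons, Walk.length_nil] at this
  omega

lemma two_le_dist (hconn : G.Connected) {u w : V} (h0 : u ≠ w) (h1 : ¬ G.Adj u w) :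
    2 ≤ G.dist u w := by
  by_contra h
  interval_cases hd : G.dist u w
  · exact h0 ((hconn.dist_eq_zero_iff).mp hd)
  · exact h1 ((SimpleGraph.dist_eq_one_iff_adj).mp hd)

lemma three_le_dist (hconn : G.Connected) {u w : V} (h0 : u ≠ w) (h1 : ¬ G.Adj u w)
    (h2 : ∀ z, G.Adj u z → G.Adj z w → False) : 3 ≤ G.dist u w := by
  have h2' := two_le_dist hconn h0 h1
  rcases Nat.lt_or_ge (G.dist u w) 3 with h | h
  · have hd : G.dist u w = 2 := by omega
    obtain ⟨p, hp⟩ := hconn.exists_walk_length_eq_dist u w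
    rw [hd] at hp
    have ha1 : G.Adj u (p.getVert 1) := by
      have := p.adj_getVert_succ (i := 0) (by omega)
      simpa using this
    have ha2 : G.Adj (p.getVert 1) w := by
      have := p.adj_getVert_succ (i := 1) (by omega)
      have h2 : p.getVert 2 = w := by
        have := p.getVert_length; rw [hp] at this; exact this
      rwa [h2] at this
    exact absurd (h2 _ ha1 ha2) (by simp)
  · exact h

lemma dist_le_three_of_chain {u z z' w : V} (h1 : G.Adj u z)
    (h2 : G.Adj z z') (h3 : G.Adj z' w) : G.dist u w ≤ 3 := by
  have := SimpleGraph.dist_le (Walk.cons h1 (Walk.cons h2 (Walk.cons h3 Walk.nil)))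
  simpa using this

end Girth

section Coupling

def cpl (G : SimpleGraph V) (α : ℝ) (x y : V) : V → V → ℝ := fun u v =>
  (if u = x then (if v = y then 2*α - 1 else mass G α y v) else 0) +
  (if v = y ∧ u ≠ x then mass G α x u else 0)

def Cval (α a b : ℝ) : ℝ :=
  (2*α - 1) + 2*(1-α)*((a-1)/a) + 2*(1-α)*((b-1)/b)

variable {G : SimpleGraph V} [G.LocallyFinite] {x y : V} {α : ℝ}

lemma one_le_deg (hadj : G.Adj x y) : 1 ≤ deg G x := by
  rw [deg_eq_degree]
  exact Finset.card_pos.mpr ⟨y, by simp [hadj]⟩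

lemma cpl_support {u v : V} (h : cpl G α x y u v ≠ 0) :
    (u = x ∧ (v = y ∨ G.Adj y v)) ∨ (v = y ∧ u ≠ x ∧ G.Adj x u) := by
  unfold cpl at h
  by_cases hu : u = x
  · subst hu
    simp only [if_pos rfl] at h
    left
    refine ⟨rfl, ?_⟩
    by_cases hv : v = y
    · exact Or.inl hv
    · rw [if_neg hv] at h
      simp only [hv, false_and, if_false, add_zero] at h
      rcases mass_support h with h' | h'
      · exact Or.inl h'
      · exact Or.inr h'
  · right
    simp only [if_neg hu] at h
    by_cases hv : v = y
    · subst hv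
      have h' : mass G α x u ≠ 0 := by simpa [hu] using h
      refine ⟨rfl, hu, ?_⟩
      rcases mass_support h' with h'' | h''
      · exact absurd h'' hu
      · exact h''
    · simp [hv] at h
  
lemma cpl_isCoupling (hadj : G.Adj x y) (hα1 : 1/2 ≤ α) (hα2 : α < 1) :
    IsCoupling (mass G α x) (mass G α y) (cpl G α x y) := by
  have hxny : x ∈ G.neighborFinset y := by simp [hadj.symm]
  have hynx : y ∈ G.neighborFinset x := by simp [hadj]
  have ha1 : 1 ≤ deg G x := one_le_deg hadj
  have hb1 : 1 ≤ deg G y := one_le_deg hadj.symm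
  have h0 : (0:ℝ) ≤ α := by linarith
  have h1 : α ≤ 1 := le_of_lt hα2
  refine ⟨?_, ?_, ?_, ?_⟩
  · intro u v
    unfold cpl
    have m1 := mass_nonneg (G := G) h0 h1 y v
    have m2 := mass_nonneg (G := G) h0 h1 x u
    split_ifs <;> simp <;> linarith
  · refine Set.Finite.subset
      (((insert x (G.neighborFinset x)) ×ˢ (insert y (G.neighborFinset y))).finite_toSet) ?_
    rintro ⟨u, v⟩ hp
    have hsupp := cpl_support (Function.mem_support.mp hp)
    dsimp only at hsupp
    rcases hsupp with ⟨h1, h2⟩ | ⟨h1, h2, h3⟩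
    · rcases h2 with h | h <;> simp [h1, h]
    · simp [h1, h3]
  · intro u
    by_cases hu : u = x
    · rw [hu]
      have he : ∀ v, cpl G α x y x v = (if v = y then 2*α - 1 else mass G α y v) := by
        intro v; simp [cpl]
      rw [finsum_congr he]
      have hsub : Function.support (fun v => if v = y then 2*α - 1 else mass G α y v)
          ⊆ ↑(insert y (G.neighborFinset y)) := by
        intro v hv
        by_cases hvy : v = y
        · simp [hvy]
        · simp only [Function.mem_support, if_neg hvy] at hv
          rcases mass_support hv with h | h
          · exact absurd h hvy
          · simp [h]
      rw [finsum_eq_sum_of_support_subset _ hsub, Finset.sum_insert (by simp)]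
      have : ∑ v ∈ G.neighborFinset y, (if v = y then 2*α - 1 else mass G α y v)
          = ∑ v ∈ G.neighborFinset y, mass G α y v := by
        refine Finset.sum_congr rfl fun v hv => ?_
        have : v ≠ y := by
          intro h; subst h; simp at hv
        rw [if_neg this]
      rw [this, sum_mass_neighbors hb1, if_pos rfl, mass_self]
      ring
    · have he : ∀ v, cpl G α x y u v = (if v = y then mass G α x u else 0) := by
        intro v
        simp only [cpl, if_neg hu, zero_add]
        by_cases hv : v = y <;> simp [hv, hu]
      rw [finsum_congr he, finsum_eq_single _ y (fun v hv => if_neg hv), if_pos rfl]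
  · intro v
    by_cases hv : v = y
    · rw [hv]
      have he : ∀ u, cpl G α x y u y = (if u = x then 2*α - 1 else mass G α x u) := by
        intro u
        by_cases hu : u = x <;> simp [cpl, hu]
      rw [finsum_congr he]
      have hsub : Function.support (fun u => if u = x then 2*α - 1 else mass G α x u)
          ⊆ ↑(insert x (G.neighborFinset x)) := by
        intro u hu
        by_cases hux : u = x
        · simp [hux]
        · simp only [Function.mem_support, if_neg hux] at hu
          rcases mass_support hu with h | h
          · exact absurd h hux
          · simp [h]
      rw [finsum_eq_sum_of_support_subset _ hsub, Finset.sum_insert (by simp)]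
      have : ∑ u ∈ G.neighborFinset x, (if u = x then 2*α - 1 else mass G α x u)
          = ∑ u ∈ G.neighborFinset x, mass G α x u := by
        refine Finset.sum_congr rfl fun u hu => ?_
        have : u ≠ x := by intro h; subst h; simp at hu
        rw [if_neg this]
      rw [this, sum_mass_neighbors ha1, if_pos rfl, mass_self]
      try ring
    · have he : ∀ u, cpl G α x y u v = (if u = x then mass G α y v else 0) := by
        intro u
        simp only [cpl, hv, false_and, if_false, add_zero]
      rw [finsum_congr he, finsum_eq_single _ x (fun u hu => if_neg hu), if_pos rfl]
      try rw [mass_eq_zero]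
      try exact (if_neg hv).symm ▸ rfl

lemma dist_le_two_of_common (hconn : G.Connected) {u z w : V} (h1 : G.Adj u z)
    (h2 : G.Adj z w) : G.dist u w ≤ 2 := by
  have := SimpleGraph.dist_le (SimpleGraph.Walk.cons h1 (SimpleGraph.Walk.cons h2
    SimpleGraph.Walk.nil))
  simpa using this

lemma cpl_cost_le (hconn : G.Connected) (hadj : G.Adj x y) (hα1 : 1/2 ≤ α) (hα2 : α < 1) :
    ∑ᶠ p : V × V, cpl G α x y p.1 p.2 * (G.dist p.1 p.2 : ℝ)
      ≤ Cval α (deg G x) (deg G y) := by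
  have hxny : x ∈ G.neighborFinset y := by simp [hadj.symm]
  have hynx : y ∈ G.neighborFinset x := by simp [hadj]
  have ha1 : 1 ≤ deg G x := one_le_deg hadj
  have hb1 : 1 ≤ deg G y := one_le_deg hadj.symm
  have hcx : (G.neighborFinset x).card = deg G x := (deg_eq_degree G x).symm
  have hcy : (G.neighborFinset y).card = deg G y := (deg_eq_degree G y).symm
  have hca : (0:ℝ) ≤ (1-α)/(deg G x) := div_nonneg (by linarith) (by positivity)
  have hcb : (0:ℝ) ≤ (1-α)/(deg G y) := div_nonneg (by linarith) (by positivity)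
  set P : Finset (V × V) :=
    (({x} : Finset V) ×ˢ insert y (G.neighborFinset y)) ∪
      ((G.neighborFinset x) ×ˢ ({y} : Finset V)) with hP
  have hdisj : Disjoint (({x} : Finset V) ×ˢ insert y (G.neighborFinset y))
      ((G.neighborFinset x) ×ˢ ({y} : Finset V)) := by
    rw [Finset.disjoint_left]
    rintro ⟨u, v⟩ hp1 hp2
    simp only [Finset.mem_product, Finset.mem_singleton] at hp1 hp2
    have : x ∈ G.neighborFinset x := hp1.1 ▸ hp2.1
    simp at this
  have hsub : Function.support (fun p : V × V => cpl G α x y p.1 p.2 * (G.dist p.1 p.2 : ℝ))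
      ⊆ ↑P := by
    rintro ⟨u, v⟩ hp
    have h0 : cpl G α x y u v ≠ 0 := by
      intro h; simp [Function.mem_support, h] at hp
    have hsupp := cpl_support h0
    simp only [hP, Finset.coe_union, Set.mem_union, Finset.coe_product, Set.mem_prod,
      Finset.coe_singleton, Set.mem_singleton_iff, Finset.coe_insert, Set.mem_insert_iff,
      SimpleGraph.mem_neighborFinset]
    rcases hsupp with ⟨h1, h2⟩ | ⟨h1, h2, h3⟩
    · refine Or.inl ⟨h1, ?_⟩
      rcases h2 with h | h
      · exact Or.inl h
      · exact Or.inr (by simpa using h)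
    · exact Or.inr ⟨by simpa using h3, h1⟩
  rw [finsum_eq_sum_of_support_subset _ hsub, Finset.sum_union hdisj]
  have e1 : ∑ p ∈ (({x} : Finset V) ×ˢ insert y (G.neighborFinset y)),
      cpl G α x y p.1 p.2 * (G.dist p.1 p.2 : ℝ)
      = ∑ v ∈ insert y (G.neighborFinset y), cpl G α x y x v * (G.dist x v : ℝ) := by
    rw [Finset.sum_product, Finset.sum_singleton]
  have e2 : ∑ p ∈ ((G.neighborFinset x) ×ˢ ({y} : Finset V)),
      cpl G α x y p.1 p.2 * (G.dist p.1 p.2 : ℝ)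
      = ∑ u ∈ G.neighborFinset x, cpl G α x y u y * (G.dist u y : ℝ) := by
    rw [Finset.sum_product]
    exact Finset.sum_congr rfl fun u _ => Finset.sum_singleton _ _
  rw [e1, e2, Finset.sum_insert (by simp)]
  have hxy1 : (G.dist x y : ℝ) = 1 := by
    rw [SimpleGraph.dist_eq_one_iff_adj.mpr hadj]; norm_num
  have hcplxy : cpl G α x y x y = 2*α - 1 := by simp [cpl]
  have hS1 : ∑ v ∈ G.neighborFinset y, cpl G α x y x v * (G.dist x v : ℝ)
      ≤ ((deg G y : ℝ) - 1) * (2 * ((1-α)/(deg G y))) := by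
    have hval : ∀ v ∈ G.neighborFinset y, cpl G α x y x v * (G.dist x v : ℝ)
        = ((1-α)/(deg G y)) * (G.dist x v : ℝ) := by
      intro v hv
      have hvy : v ≠ y := by intro h; subst h; simp at hv
      have : cpl G α x y x v = mass G α y v := by simp [cpl, hvy]
      rw [this, mass_adj (by simpa using hv)]
    rw [Finset.sum_congr rfl hval, ← Finset.add_sum_erase _ _ hxny]
    have hd0 : (G.dist x x : ℝ) = 0 := by simp
    rw [hd0, mul_zero, zero_add]
    calc ∑ v ∈ (G.neighborFinset y).erase x, ((1-α)/(deg G y)) * (G.dist x v : ℝ)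
        ≤ ∑ v ∈ (G.neighborFinset y).erase x, ((1-α)/(deg G y)) * 2 := by
          refine Finset.sum_le_sum fun v hv => ?_
          have hvy : G.Adj y v := by
            have := Finset.mem_of_mem_erase hv; simpa using this
          have hd : G.dist x v ≤ 2 := dist_le_two_of_common hconn hadj hvy
          have hd' : (G.dist x v : ℝ) ≤ 2 := by exact_mod_cast hd
          exact mul_le_mul_of_nonneg_left hd' hcb
      _ = ((deg G y : ℝ) - 1) * (2 * ((1-α)/(deg G y))) := by
          rw [Finset.sum_const, Finset.card_erase_of_mem hxny, hcy, nsmul_eq_mul]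
          rw [Nat.cast_sub hb1]
          push_cast
          ring
  have hS2 : ∑ u ∈ G.neighborFinset x, cpl G α x y u y * (G.dist u y : ℝ)
      ≤ ((deg G x : ℝ) - 1) * (2 * ((1-α)/(deg G x))) := by
    have hval : ∀ u ∈ G.neighborFinset x, cpl G α x y u y * (G.dist u y : ℝ)
        = ((1-α)/(deg G x)) * (G.dist u y : ℝ) := by
      intro u hu
      have hadjxu : G.Adj x u := by simpa using hu
      have hux : u ≠ x := hadjxu.ne'
      have : cpl G α x y u y = mass G α x u := by simp [cpl, hux]
      rw [this, mass_adj hadjxu]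
    rw [Finset.sum_congr rfl hval, ← Finset.add_sum_erase _ _ hynx]
    have hd0 : (G.dist y y : ℝ) = 0 := by simp
    rw [hd0, mul_zero, zero_add]
    calc ∑ u ∈ (G.neighborFinset x).erase y, ((1-α)/(deg G x)) * (G.dist u y : ℝ)
        ≤ ∑ u ∈ (G.neighborFinset x).erase y, ((1-α)/(deg G x)) * 2 := by
          refine Finset.sum_le_sum fun u hu => ?_
          have hxu : G.Adj x u := by
            have := Finset.mem_of_mem_erase hu; simpa using this
          have hd : G.dist u y ≤ 2 := dist_le_two_of_common hconn hxu.symm hadj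
          have hd' : (G.dist u y : ℝ) ≤ 2 := by exact_mod_cast hd
          exact mul_le_mul_of_nonneg_left hd' hca
      _ = ((deg G x : ℝ) - 1) * (2 * ((1-α)/(deg G x))) := by
          rw [Finset.sum_const, Finset.card_erase_of_mem hynx, hcx, nsmul_eq_mul]
          rw [Nat.cast_sub ha1]
          push_cast
          ring
  rw [hcplxy, hxy1, mul_one]
  have ha0 : ((deg G x : ℝ)) ≠ 0 := Nat.cast_ne_zero.mpr (by omega)
  have hb0 : ((deg G y : ℝ)) ≠ 0 := Nat.cast_ne_zero.mpr (by omega)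
  have : Cval α (deg G x) (deg G y) = (2*α-1)
      + ((deg G y : ℝ) - 1) * (2 * ((1-α)/(deg G y)))
      + ((deg G x : ℝ) - 1) * (2 * ((1-α)/(deg G x))) := by
    unfold Cval
    field_simp
    ring
  rw [this]
  linarith

section Duality

theorem duality (G : SimpleGraph V) {m₁ m₂ : V → ℝ} {A : V → V → ℝ}
    (hA : IsCoupling m₁ m₂ A) (f : V → ℝ)
    (hf : ∀ u v : V, f u - f v ≤ (G.dist u v : ℝ))
    (hm₁ : (Function.support m₁).Finite) (hm₂ : (Function.support m₂).Finite) :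
    (∑ᶠ u, f u * m₁ u) - (∑ᶠ u, f u * m₂ u) ≤
      ∑ᶠ p : V × V, A p.1 p.2 * (G.dist p.1 p.2 : ℝ) := by
  obtain ⟨hpos, hfin, hrow, hcol⟩ := hA
  classical
  set s : Finset (V × V) := hfin.toFinset with hs
  set T : Finset V := ((s.image Prod.fst ∪ s.image Prod.snd) ∪ hm₁.toFinset) ∪ hm₂.toFinset
    with hT
  have key : ∀ u v : V, A u v ≠ 0 → u ∈ T ∧ v ∈ T := by
    intro u v huv
    have hmem : (u, v) ∈ s := by simp [hs, Function.mem_support, huv]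
    constructor
    · simp only [hT, Finset.mem_union]
      exact Or.inl (Or.inl (Or.inl (Finset.mem_image.mpr ⟨(u,v), hmem, rfl⟩)))
    · simp only [hT, Finset.mem_union]
      exact Or.inl (Or.inl (Or.inr (Finset.mem_image.mpr ⟨(u,v), hmem, rfl⟩)))
  have hrow' : ∀ u, m₁ u = ∑ v ∈ T, A u v := by
    intro u
    rw [← hrow u]
    exact finsum_eq_sum_of_support_subset _ (fun v hv => (key u v hv).2)
  have hcol' : ∀ v, m₂ v = ∑ u ∈ T, A u v := by
    intro v
    rw [← hcol v]
    exact finsum_eq_sum_of_support_subset _ (fun u hu => (key u v hu).1)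
  have hL1 : ∑ᶠ u, f u * m₁ u = ∑ u ∈ T, f u * m₁ u := by
    refine finsum_eq_sum_of_support_subset _ (fun u hu => ?_)
    have : m₁ u ≠ 0 := by
      intro h0; simp [Function.mem_support, h0] at hu
    simp only [hT, Finset.coe_union, Set.mem_union]
    exact Or.inl (Or.inr (by simpa using this))
  have hL2 : ∑ᶠ u, f u * m₂ u = ∑ u ∈ T, f u * m₂ u := by
    refine finsum_eq_sum_of_support_subset _ (fun u hu => ?_)
    have : m₂ u ≠ 0 := by
      intro h0; simp [Function.mem_support, h0] at hu
    simp only [hT, Finset.coe_union, Set.mem_union]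
    exact Or.inr (by simpa using this)
  have hR : ∑ᶠ p : V × V, A p.1 p.2 * (G.dist p.1 p.2 : ℝ)
      = ∑ p ∈ T ×ˢ T, A p.1 p.2 * (G.dist p.1 p.2 : ℝ) := by
    refine finsum_eq_sum_of_support_subset _ (fun p hp => ?_)
    have hA0 : A p.1 p.2 ≠ 0 := by
      intro h0; apply hp; simp [Function.mem_support, h0]
    have := key p.1 p.2 hA0
    simp [Finset.mem_product, this.1, this.2]
  rw [hL1, hL2, hR]
  have lhs_eq : (∑ u ∈ T, f u * m₁ u) - (∑ u ∈ T, f u * m₂ u)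
      = ∑ u ∈ T, ∑ v ∈ T, (f u - f v) * A u v := by
    have e1 : ∑ u ∈ T, f u * m₁ u = ∑ u ∈ T, ∑ v ∈ T, f u * A u v := by
      refine Finset.sum_congr rfl fun u _ => ?_
      rw [hrow' u, Finset.mul_sum]
    have e2 : ∑ v ∈ T, f v * m₂ v = ∑ u ∈ T, ∑ v ∈ T, f v * A u v := by
      rw [Finset.sum_comm]
      refine Finset.sum_congr rfl fun v _ => ?_
      rw [hcol' v, Finset.mul_sum]
    rw [e1, e2, ← Finset.sum_sub_distrib]
    refine Finset.sum_congr rfl fun u _ => ?_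
    rw [← Finset.sum_sub_distrib]
    refine Finset.sum_congr rfl fun v _ => ?_
    ring
  rw [lhs_eq, Finset.sum_product]
  refine Finset.sum_le_sum fun u _ => Finset.sum_le_sum fun v _ => ?_
  have := hf u v
  have h0 := hpos u v
  nlinarith [hpos u v, hf u v]

end Duality

lemma mass_support_finite (α : ℝ) (x : V) : (Function.support (mass G α x)).Finite := by
  refine Set.Finite.subset (insert x (G.neighborFinset x)).finite_toSet ?_
  intro u hu
  rcases mass_support (Function.mem_support.mp hu) with h | h
  · simp [h]
  · simp [h]

lemma dual_exists (hconn : G.Connected) (hadj : G.Adj x y) (hg : 6 ≤ G.girth)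
    (hα1 : 1/2 ≤ α) (hα2 : α < 1) :
    ∃ f : V → ℝ, (∀ u v : V, f u - f v ≤ (G.dist u v : ℝ)) ∧
      (∑ᶠ u, f u * mass G α x u) - (∑ᶠ u, f u * mass G α y u)
        = Cval α (deg G x) (deg G y) := by
  have hxny : x ∈ G.neighborFinset y := by simp [hadj.symm]
  have hynx : y ∈ G.neighborFinset x := by simp [hadj]
  have ha1 : 1 ≤ deg G x := one_le_deg hadj
  have hb1 : 1 ≤ deg G y := one_le_deg hadj.symm
  have hcx : (G.neighborFinset x).card = deg G x := (deg_eq_degree G x).symm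
  have hcy : (G.neighborFinset y).card = deg G y := (deg_eq_degree G y).symm
  have ha0 : ((deg G x : ℝ)) ≠ 0 := Nat.cast_ne_zero.mpr (by omega)
  have hb0 : ((deg G y : ℝ)) ≠ 0 := Nat.cast_ne_zero.mpr (by omega)
  -- girth facts
  have hnadjx : ∀ t, G.Adj y t → t ≠ x → ¬ G.Adj x t := by
    intro t hyt htx hxt
    exact no_triangle hg hxt (hyt.symm) hadj.symm
  have hnadjy : ∀ u, G.Adj x u → u ≠ y → ¬ G.Adj u y := by
    intro u hxu huy huy'
    exact no_triangle hg hxu huy' hadj.symm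
  have hne_ut : ∀ u t, G.Adj x u → u ≠ y → G.Adj y t → t ≠ x → u ≠ t := by
    intro u t hxu huy hyt htx h
    subst h
    exact no_triangle hg hxu hyt.symm hadj.symm
  have hd3 : ∀ u t, G.Adj x u → u ≠ y → G.Adj y t → t ≠ x → 3 ≤ G.dist u t := by
    intro u t hxu huy hyt htx
    refine three_le_dist hconn (hne_ut u t hxu huy hyt htx) ?_ ?_
    · intro hut
      exact no_square hg hxu hut hyt.symm hadj.symm htx.symm huy
    · intro z huz hzt
      have hxz : x ≠ z := by
        intro h; subst h
        exact hnadjx t hyt htx (hzt)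
      have hzy : z ≠ y := by
        intro h; subst h
        exact hnadjy u hxu huy huz
      exact no_pentagon hg hxu huz hzt hyt.symm hadj.symm hxz htx.symm
        (hne_ut u t hxu huy hyt htx) huy hzy
  -- the two sums, generically in f
  have hsums : ∀ f : V → ℝ,
      (∑ᶠ u, f u * mass G α x u) - (∑ᶠ u, f u * mass G α y u)
      = (f x * α + (f y * ((1-α)/(deg G x))
          + ∑ u ∈ (G.neighborFinset x).erase y, f u * ((1-α)/(deg G x))))
        - (f y * α + (f x * ((1-α)/(deg G y))
          + ∑ t ∈ (G.neighborFinset y).erase x, f t * ((1-α)/(deg G y)))) := by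
    intro f
    rw [finsum_mul_mass, finsum_mul_mass,
      ← Finset.add_sum_erase _ _ hynx, ← Finset.add_sum_erase _ _ hxny]
  by_cases hb2 : 2 ≤ deg G y
  · -- case deg y ≥ 2 : f = dist to (N(y) \ {x}) minus 1
    have hNe : ((G.neighborFinset y).erase x).Nonempty := by
      rw [← Finset.card_pos, Finset.card_erase_of_mem hxny, hcy]
      omega
    set Ny' := (G.neighborFinset y).erase x with hNy'
    have hmem : ∀ t ∈ Ny', G.Adj y t ∧ t ≠ x := by
      intro t ht
      have h1 := Finset.mem_of_mem_erase ht
      exact ⟨by simpa using h1, Finset.ne_of_mem_erase ht⟩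
    refine ⟨fun v => (Ny'.inf' hNe fun t => (G.dist v t : ℝ)) - 1, ?_, ?_⟩
    · intro u v
      obtain ⟨t, htm, hteq⟩ := Finset.exists_mem_eq_inf' hNe (fun t => (G.dist v t : ℝ))
      have h1 : Ny'.inf' hNe (fun t => (G.dist u t : ℝ)) ≤ (G.dist u t : ℝ) :=
        Finset.inf'_le _ htm
      have h2 : G.dist u t ≤ G.dist u v + G.dist v t := hconn.dist_triangle
      have h2' : (G.dist u t : ℝ) ≤ (G.dist u v : ℝ) + (G.dist v t : ℝ) := by exact_mod_cast h2
      dsimp only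
      rw [hteq]
      linarith
    · set f := fun v => (Ny'.inf' hNe fun t => (G.dist v t : ℝ)) - 1 with hf
      have hval : ∀ (v : V) (m : ℝ), (∀ t ∈ Ny', m ≤ (G.dist v t : ℝ)) →
          (∃ t ∈ Ny', (G.dist v t : ℝ) ≤ m) → f v = m - 1 := by
        intro v m hlow ⟨t₀, ht₀, hup⟩
        have h1 : Ny'.inf' hNe (fun t => (G.dist v t : ℝ)) = m := by
          refine le_antisymm (le_trans (Finset.inf'_le _ ht₀) hup) ?_
          exact Finset.le_inf' _ _ hlow
        simp only [hf, h1]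
      obtain ⟨t₀, ht₀⟩ := hNe
      have ht₀' := hmem t₀ ht₀
      have hfx : f x = 1 := by
        have := hval x 2 (fun t ht => ?_) ⟨t₀, ht₀, ?_⟩
        · rw [this]; norm_num
        · obtain ⟨h1, h2⟩ := hmem t ht
          have := two_le_dist hconn (Ne.symm h2) (hnadjx t h1 h2)
          exact_mod_cast this
        · have := dist_le_two_of_common hconn hadj ht₀'.1
          exact_mod_cast this
      have hfy : f y = 0 := by
        have := hval y 1 (fun t ht => ?_) ⟨t₀, ht₀, ?_⟩
        · rw [this]; norm_num
        · have := (SimpleGraph.dist_eq_one_iff_adj (G := G)).mpr (hmem t ht).1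
          simp [this]
        · have := (SimpleGraph.dist_eq_one_iff_adj (G := G)).mpr ht₀'.1
          simp [this]
      have hfu : ∀ u ∈ (G.neighborFinset x).erase y, f u = 2 := by
        intro u hu
        have hxu : G.Adj x u := by simpa using Finset.mem_of_mem_erase hu
        have huy : u ≠ y := Finset.ne_of_mem_erase hu
        have := hval u 3 (fun t ht => ?_) ⟨t₀, ht₀, ?_⟩
        · rw [this]; norm_num
        · obtain ⟨h1, h2⟩ := hmem t ht
          have := hd3 u t hxu huy h1 h2
          exact_mod_cast this
        · have := dist_le_three_of_chain hxu.symm hadj ht₀'.1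
          exact_mod_cast this
      have hft : ∀ t ∈ Ny', f t = -1 := by
        intro t ht
        have := hval t 0 (fun t' ht' => by positivity) ⟨t, ht, by simp⟩
        rw [this]; norm_num
      rw [hsums]
      rw [hfx, hfy]
      have e1 : ∑ u ∈ (G.neighborFinset x).erase y, f u * ((1-α)/(deg G x))
          = ((deg G x : ℝ) - 1) * (2 * ((1-α)/(deg G x))) := by
        rw [Finset.sum_congr rfl (fun u hu => by rw [hfu u hu])]
        rw [Finset.sum_const, Finset.card_erase_of_mem hynx, hcx, nsmul_eq_mul,
          Nat.cast_sub ha1]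
        push_cast; ring
      have e2 : ∑ t ∈ (G.neighborFinset y).erase x, f t * ((1-α)/(deg G y))
          = ((deg G y : ℝ) - 1) * (-1 * ((1-α)/(deg G y))) := by
        rw [Finset.sum_congr rfl (fun t ht => by rw [hft t ht])]
        rw [Finset.sum_const, Finset.card_erase_of_mem hxny, hcy, nsmul_eq_mul,
          Nat.cast_sub hb1]
        push_cast; ring
      rw [e1, e2]
      unfold Cval
      field_simp
      ring
  · -- case deg y = 1 : f = dist to y
    have hbeq : deg G y = 1 := by omega
    have hNy : G.neighborFinset y = {x} := by
      have : (G.neighborFinset y).card = 1 := by rw [hcy, hbeq]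
      obtain ⟨z, hz⟩ := Finset.card_eq_one.mp this
      rw [hz]
      rw [hz] at hxny
      simp at hxny
      rw [hxny]
    refine ⟨fun v => (G.dist v y : ℝ), ?_, ?_⟩
    · intro u v
      have h2 : G.dist u y ≤ G.dist u v + G.dist v y := hconn.dist_triangle
      have h2' : (G.dist u y : ℝ) ≤ (G.dist u v : ℝ) + (G.dist v y : ℝ) := by exact_mod_cast h2
      linarith
    · rw [hsums]
      have hfx : (G.dist x y : ℝ) = 1 := by
        rw [SimpleGraph.dist_eq_one_iff_adj.mpr hadj]; norm_num
      have hfy : (G.dist y y : ℝ) = 0 := by simp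
      have hfu : ∀ u ∈ (G.neighborFinset x).erase y, (G.dist u y : ℝ) = 2 := by
        intro u hu
        have hxu : G.Adj x u := by simpa using Finset.mem_of_mem_erase hu
        have huy : u ≠ y := Finset.ne_of_mem_erase hu
        have hlow := two_le_dist hconn huy (hnadjy u hxu huy)
        have hup := dist_le_two_of_common hconn hxu.symm hadj
        have : G.dist u y = 2 := le_antisymm hup hlow
        rw [this]; norm_num
      have e1 : ∑ u ∈ (G.neighborFinset x).erase y, (G.dist u y : ℝ) * ((1-α)/(deg G x))
          = ((deg G x : ℝ) - 1) * (2 * ((1-α)/(deg G x))) := by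
        rw [Finset.sum_congr rfl (fun u hu => by rw [hfu u hu])]
        rw [Finset.sum_const, Finset.card_erase_of_mem hynx, hcx, nsmul_eq_mul,
          Nat.cast_sub ha1]
        push_cast; ring
      have e2 : (G.neighborFinset y).erase x = ∅ := by
        rw [hNy]; simp
      rw [hfx, hfy, e1, e2]
      unfold Cval
      rw [hbeq]
      push_cast
      field_simp
      ring

lemma W_eq (hconn : G.Connected) (hadj : G.Adj x y) (hg : 6 ≤ G.girth)
    (hα1 : 1/2 ≤ α) (hα2 : α < 1) :
    W G (mass G α x) (mass G α y) = Cval α (deg G x) (deg G y) := by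
  have hmem : (∑ᶠ p : V × V, cpl G α x y p.1 p.2 * (G.dist p.1 p.2 : ℝ)) ∈
      {c | ∃ A : V → V → ℝ, IsCoupling (mass G α x) (mass G α y) A ∧
        c = ∑ᶠ p : V × V, A p.1 p.2 * (G.dist p.1 p.2 : ℝ)} :=
    ⟨cpl G α x y, cpl_isCoupling hadj hα1 hα2, rfl⟩
  obtain ⟨f, hf, hfeq⟩ := dual_exists hconn hadj hg hα1 hα2
  have hlow : ∀ c ∈ {c | ∃ A : V → V → ℝ, IsCoupling (mass G α x) (mass G α y) A ∧
      c = ∑ᶠ p : V × V, A p.1 p.2 * (G.dist p.1 p.2 : ℝ)},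
      Cval α (deg G x) (deg G y) ≤ c := by
    rintro c ⟨A, hA, rfl⟩
    rw [← hfeq]
    exact duality G hA f hf (mass_support_finite α x) (mass_support_finite α y)
  refine le_antisymm ?_ ?_
  · refine le_trans (csInf_le ?_ hmem) (cpl_cost_le hconn hadj hα1 hα2)
    exact ⟨Cval α (deg G x) (deg G y), fun c hc => hlow c hc⟩
  · exact le_csInf ⟨_, hmem⟩ hlow

end Coupling

section Ricci
variable {G : SimpleGraph V} [G.LocallyFinite] {x y : V}

lemma kappaAlpha_eq (hconn : G.Connected) (hadj : G.Adj x y) (hg : 6 ≤ G.girth)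
    {α : ℝ} (hα1 : 1/2 ≤ α) (hα2 : α < 1) :
    kappaAlpha G α x y = (1-α) * (2/(deg G x : ℝ) + 2/(deg G y : ℝ) - 2) := by
  have ha0 : ((deg G x : ℝ)) ≠ 0 := Nat.cast_ne_zero.mpr (by have := one_le_deg hadj; omega)
  have hb0 : ((deg G y : ℝ)) ≠ 0 :=
    Nat.cast_ne_zero.mpr (by have := one_le_deg hadj.symm; omega)
  rw [kappaAlpha, W_eq hconn hadj hg hα1 hα2]
  unfold Cval
  field_simp
  ring

lemma ricci_eq (hconn : G.Connected) (hadj : G.Adj x y) (hg : 6 ≤ G.girth) :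
    ricci G x y = 2/(deg G x : ℝ) + 2/(deg G y : ℝ) - 2 := by
  set c : ℝ := 2/(deg G x : ℝ) + 2/(deg G y : ℝ) - 2 with hc
  have hmem : Set.Ioo (1/2 : ℝ) 1 ∈ 𝓝[<] (1:ℝ) :=
    Ioo_mem_nhdsLT_of_mem (by constructor <;> norm_num)
  have heq : (fun _ : ℝ => c) =ᶠ[𝓝[<] (1:ℝ)] (fun α => kappaAlpha G α x y / (1 - α)) := by
    refine Filter.eventuallyEq_of_mem hmem (fun α hα => ?_)
    obtain ⟨h1, h2⟩ := hα
    have hne : (1 - α) ≠ 0 := sub_ne_zero.mpr (by linarith)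
    rw [kappaAlpha_eq hconn hadj hg (le_of_lt h1) h2, hc,
      mul_comm, mul_div_assoc, div_self hne, mul_one]
  have htend : Filter.Tendsto (fun α => kappaAlpha G α x y / (1 - α)) (𝓝[<] (1:ℝ)) (𝓝 c) :=
    Filter.Tendsto.congr' heq tendsto_const_nhds
  exact htend.limUnder_eq

lemma deg_eq_two_of_adj (hconn : G.Connected) (hflat : RicciFlat G) (hg : 6 ≤ G.girth)
    (hadj : G.Adj x y) : deg G x = 2 := by
  have h := hflat x y hadj
  rw [ricci_eq hconn hadj hg] at h
  have ha1 : 1 ≤ deg G x := one_le_deg hadj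
  have hb1 : 1 ≤ deg G y := one_le_deg hadj.symm
  have ha0 : ((deg G x : ℝ)) ≠ 0 := Nat.cast_ne_zero.mpr (by omega)
  have hb0 : ((deg G y : ℝ)) ≠ 0 := Nat.cast_ne_zero.mpr (by omega)
  set a := deg G x
  set b := deg G y
  have hr : (a : ℝ) * b = a + b := by
    field_simp at h
    nlinarith [h]
  have hnat : a * b = a + b := by exact_mod_cast hr
  -- solve over ℕ
  have hb2 : 2 ≤ b := by
    rcases Nat.lt_or_ge b 2 with hb | hb
    · interval_cases b <;> omega
    · exact hb
  have ha2 : 2 ≤ a := by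
    rcases Nat.lt_or_ge a 2 with ha | ha
    · interval_cases a <;> omega
    · exact ha
  have h1 : b ≤ a := by nlinarith
  have h2 : a ≤ b := by nlinarith
  have hab : a = b := le_antisymm h2 h1
  rw [hab] at hnat
  nlinarith
end Ricci

section Aux2
variable {G : SimpleGraph V}

lemma getVert_eq_support_getElem {u v : V} (p : G.Walk u v) {i : ℕ}
    (hi : i < p.support.length) : p.getVert i = p.support[i] := by
  induction p generalizing i with
  | nil =>
      simp only [Walk.support_nil, List.length_singleton] at hi
      interval_cases i
      simp [Walk.getVert]
  | cons h q ih =>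
      cases i with
      | zero => simp [Walk.getVert]
      | succ n =>
          simp only [Walk.support_cons, List.length_cons] at hi
          simp only [Walk.getVert_cons_succ, Walk.support_cons, List.getElem_cons_succ]
          exact ih (by omega)

lemma isCycle_getVert_inj {v : V} {c : G.Walk v v} (hc : c.IsCycle) {i j : ℕ}
    (hi : i < c.length) (hj : j < c.length) (h : c.getVert i = c.getVert j) : i = j := by
  have hlen : c.support.length = c.length + 1 := c.length_support
  have h3 := hc.three_le_length
  set t := c.support.tail with ht
  have htail : t.length = c.length := by
    rw [ht, List.length_tail, hlen]
    omega
  have hnodup : t.Nodup := hc.2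
  have hcons : c.support = v :: t := c.support_eq_cons
  have hk : ∀ k, 1 ≤ k → (hkle : k ≤ c.length) → c.getVert k = t[k-1]'(by omega) := by
    intro k hk1 hkle
    rw [getVert_eq_support_getElem c (by omega)]
    have : c.support[k]'(by omega) = (v :: t)[k]'(by rw [← hcons]; omega) := by
      congr 1
    rw [this]
    rcases Nat.exists_eq_add_of_le hk1 with ⟨m, rfl⟩
    have : (1 + m) = m + 1 := by omega
    simp_rw [this]
    simp only [List.getElem_cons_succ]
    congr 1
  have hvlen : c.getVert c.length = v := c.getVert_length
  rcases Nat.eq_zero_or_pos i with hi0 | hi1 <;> rcases Nat.eq_zero_or_pos j with hj0 | hj1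
  · omega
  · exfalso
    subst hi0
    rw [c.getVert_zero, hk j (by omega) (by omega)] at h
    have h2 : c.getVert c.length = t[c.length - 1]'(by omega) := hk _ (by omega) le_rfl
    rw [hvlen] at h2
    have : t[j-1]'(by omega) = t[c.length-1]'(by omega) := h.symm.trans h2
    rw [hnodup.getElem_inj_iff] at this
    omega
  · exfalso
    subst hj0
    rw [c.getVert_zero, hk i (by omega) (by omega)] at h
    have h2 : c.getVert c.length = t[c.length - 1]'(by omega) := hk _ (by omega) le_rfl
    rw [hvlen] at h2
    have : t[i-1]'(by omega) = t[c.length-1]'(by omega) := h.trans h2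
    rw [hnodup.getElem_inj_iff] at this
    omega
  · rw [hk i (by omega) (by omega), hk j (by omega) (by omega),
      hnodup.getElem_inj_iff] at h
    omega

lemma mem_of_closed (S : Set V) (hcl : ∀ ⦃a b⦄, a ∈ S → G.Adj a b → b ∈ S)
    {u w : V} (p : G.Walk u w) (hu : u ∈ S) : w ∈ S := by
  induction p with
  | nil => exact hu
  | cons h q ih => exact ih (hcl hu h)

lemma neighbors_eq {z w₁ w₂ : V} [G.LocallyFinite] (hdeg : G.degree z = 2)
    (h1 : G.Adj z w₁) (h2 : G.Adj z w₂) (hne : w₁ ≠ w₂) :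
    ∀ w, G.Adj z w → w = w₁ ∨ w = w₂ := by
  classical
  intro w hw
  have hsub : ({w₁, w₂} : Finset V) ⊆ G.neighborFinset z := by
    intro u hu
    simp only [Finset.mem_insert, Finset.mem_singleton] at hu
    rcases hu with h | h <;> subst h <;> simp [h1, h2]
  have hcard : ({w₁, w₂} : Finset V).card = 2 := Finset.card_pair hne
  have : G.neighborFinset z = {w₁, w₂} := by
    refine (Finset.eq_of_subset_of_card_le hsub ?_).symm
    rw [hcard, ← hdeg]
    rfl
  have hwmem : w ∈ G.neighborFinset z := by simp [hw]
  rw [this] at hwmem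
  simpa using hwmem


theorem iso_cycle {n : ℕ} [G.LocallyFinite] (hconn : G.Connected)
    (hdeg2 : ∀ v : V, G.degree v = 2) {v : V} (c : G.Walk v v) (hc : c.IsCycle)
    (hlen : c.length = n) (hn : 6 ≤ n) : Nonempty (G ≃g cycleGraph n) := by
  haveI : NeZero n := ⟨by omega⟩
  haveI : Fact (1 < n) := ⟨by omega⟩
  set φ : ZMod n → V := fun i => c.getVert i.val with hφ
  have hvlt : ∀ i : ZMod n, i.val < n := fun i => i.val_lt
  have hstep : ∀ i : ZMod n, G.Adj (φ i) (φ (i + 1)) := by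
    intro i
    have hval : (i + 1).val = (i.val + 1) % n := by
      rw [ZMod.val_add, ZMod.val_one]
    rcases Nat.lt_or_ge (i.val + 1) n with h | h
    · have : (i + 1).val = i.val + 1 := by rw [hval, Nat.mod_eq_of_lt h]
      rw [hφ]
      dsimp only
      rw [this]
      exact c.adj_getVert_succ (by omega)
    · have hie : i.val = n - 1 := by have := hvlt i; omega
      have h0 : (i + 1).val = 0 := by
        rw [hval, hie]
        have : n - 1 + 1 = n := by omega
        rw [this, Nat.mod_self]
      rw [hφ]
      dsimp only
      rw [h0, hie, c.getVert_zero]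
      have := c.adj_getVert_succ (i := n - 1) (by omega)
      have hgl : c.getVert (n - 1 + 1) = v := by
        have : n - 1 + 1 = c.length := by omega
        rw [this, c.getVert_length]
      rwa [hgl] at this
  have hinj : Function.Injective φ := by
    intro i j h
    have := isCycle_getVert_inj hc (by rw [hlen]; exact hvlt i) (by rw [hlen]; exact hvlt j) h
    exact ZMod.val_injective n this
  have htwo : (2 : ZMod n) ≠ 0 := by
    intro h
    have : ((2 : ℕ) : ZMod n) = 0 := by exact_mod_cast h
    rw [ZMod.natCast_eq_zero_iff] at this
    have := Nat.le_of_dvd (by norm_num) this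
    omega
  have hne2 : ∀ i : ZMod n, i + 1 ≠ i - 1 := by
    intro i h
    apply htwo
    have : (i + 1) - (i - 1) = 2 := by ring
    rw [h] at this
    simpa using this.symm
  have hnbr : ∀ (i : ZMod n) (w : V), G.Adj (φ i) w → w = φ (i + 1) ∨ w = φ (i - 1) := by
    intro i w hw
    have h1 : G.Adj (φ i) (φ (i + 1)) := hstep i
    have h2 : G.Adj (φ i) (φ (i - 1)) := by
      have := hstep (i - 1)
      rw [sub_add_cancel] at this
      exact this.symm
    exact neighbors_eq (hdeg2 (φ i)) h1 h2 (fun h => hne2 i (hinj h)) w hw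
  have hsurj : Function.Surjective φ := by
    intro w
    have hvmem : v ∈ Set.range φ := ⟨0, by simp [hφ, ZMod.val_zero]⟩
    have hcl : ∀ ⦃a b : V⦄, a ∈ Set.range φ → G.Adj a b → b ∈ Set.range φ := by
      rintro a b ⟨i, rfl⟩ hab
      rcases hnbr i b hab with h | h
      · exact ⟨i + 1, h.symm⟩
      · exact ⟨i - 1, h.symm⟩
    obtain ⟨p⟩ := hconn.preconnected v w
    exact mem_of_closed _ hcl p hvmem
  have hiff : ∀ i j : ZMod n, G.Adj (φ i) (φ j) ↔ (cycleGraph n).Adj i j := by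
    intro i j
    constructor
    · intro h
      have hne : i ≠ j := fun he => G.irrefl (he ▸ h)
      rcases hnbr i (φ j) h with h' | h'
      · have : j = i + 1 := hinj h'
        refine ⟨hne, Or.inr ?_⟩
        rw [this]; ring
      · have : j = i - 1 := hinj h'
        refine ⟨hne, Or.inl ?_⟩
        rw [this]; ring
    · rintro ⟨hne, h | h⟩
      · have : i = j + 1 := by
          have := h; rw [sub_eq_iff_eq_add] at this; rw [this]; ring
        rw [this]
        exact (hstep j).symm
      · have : j = i + 1 := by
          have := h; rw [sub_eq_iff_eq_add] at this; rw [this]; ring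
        rw [this]
        exact hstep i
  exact ⟨(RelIso.mk (Equiv.ofBijective φ ⟨hinj, hsurj⟩)
    (fun {i j} => hiff i j)).symm⟩

end Aux2
end Aux

/-- A connected, locally finite simple Ricci-flat graph with
girth at least 6 is 2-regular; consequently it is the two-way infinite path
or a cycle `C_n` with `n ≥ 6`. -/
theorem ricciFlat_girth_ge_six
    {V : Type*} (G : SimpleGraph V) [G.LocallyFinite]
    (hconn : G.Connected) (hflat : RicciFlat G) (hgirth : 6 ≤ G.girth) :
    (∀ v : V, deg G v = 2) ∧
    (Nonempty (G ≃g infinitePath) ∨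
      ∃ n : ℕ, 6 ≤ n ∧ Nonempty (G ≃g cycleGraph n))  := by
  classical
  have hac : ¬ G.IsAcyclic := by
    intro h
    have h0 := SimpleGraph.girth_eq_zero.mpr h
    omega
  obtain ⟨v, c, hc, hgl⟩ := SimpleGraph.exists_girth_eq_length.mpr hac
  have h3 := hc.three_le_length
  have hnbr : ∀ w : V, ∃ u, G.Adj w u := by
    intro w
    by_contra hno
    push_neg at hno
    obtain ⟨p⟩ := hconn.preconnected w v
    have hwv : w = v := by
      cases p with
      | nil => rfl
      | cons h q => exact absurd h (hno _)
    have hv1 : G.Adj v (c.getVert 1) := by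
      have := c.adj_getVert_succ (i := 0) (by omega)
      rwa [c.getVert_zero] at this
    subst hwv
    exact hno _ hv1
  have hdeg : ∀ w : V, deg G w = 2 := by
    intro w
    obtain ⟨u, hu⟩ := hnbr w
    exact deg_eq_two_of_adj hconn hflat hgirth hu
  refine ⟨hdeg, Or.inr ⟨G.girth, hgirth, ?_⟩⟩
  exact iso_cycle hconn (fun w => by rw [← deg_eq_degree]; exact hdeg w) c hc hgl.symm hgirth


end RicciFlatPaper

end
end

section
/- Suppose that an edge xy in a connected, locally finite simple graph G is not contained in any cycle of length 3, 4, or 5. Then κ(x,y) = 2/d_x + 2/d_y − 2, where d_x and d_y are the degrees of x and y. -/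
open Filter Topology Classical

noncomputable section

namespace RicciFlatPaper

variable {V : Type*}

section Cycles
variable {G : SimpleGraph V} {x y : V}

lemma no_tri (h3 : ¬ EdgeInCycleOfLength G x y 3) (hxy : G.Adj x y)
    {u : V} (h1 : G.Adj x u) (h2 : G.Adj u y) : False := by
  apply h3
  refine ⟨x, SimpleGraph.Walk.cons hxy (SimpleGraph.Walk.cons h2.symm
    (SimpleGraph.Walk.cons h1.symm SimpleGraph.Walk.nil)), ?_, by simp, by simp⟩
  rw [SimpleGraph.Walk.cons_isCycle_iff]
  refine ⟨?_, ?_⟩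
  · simp [SimpleGraph.Walk.isPath_def, h2.ne', hxy.ne', h1.ne']
  · intro h
    simp only [SimpleGraph.Walk.edges_cons, SimpleGraph.Walk.edges_nil, List.mem_cons,
      List.not_mem_nil, or_false] at h
    rcases h with h | h
    all_goals (rw [Sym2.eq_iff] at h; rcases h with ⟨h1, h2⟩ | ⟨h1, h2⟩ <;> subst_vars <;>
      simp_all [SimpleGraph.irrefl])

lemma no_quad (h4 : ¬ EdgeInCycleOfLength G x y 4) (hxy : G.Adj x y)
    {u v : V} (hxu : G.Adj x u) (huv : G.Adj u v) (hvy : G.Adj v y)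
    (huy : u ≠ y) (hvx : v ≠ x) : False := by
  apply h4
  refine ⟨x, SimpleGraph.Walk.cons hxu (SimpleGraph.Walk.cons huv
    (SimpleGraph.Walk.cons hvy (SimpleGraph.Walk.cons hxy.symm SimpleGraph.Walk.nil))),
    ?_, by simp, ?_⟩
  · rw [SimpleGraph.Walk.cons_isCycle_iff]
    refine ⟨?_, ?_⟩
    · simp [SimpleGraph.Walk.isPath_def, huv.ne, huy, hxu.ne', hvy.ne, hvx, hxy.ne']
    · intro h
      simp only [SimpleGraph.Walk.edges_cons, SimpleGraph.Walk.edges_nil, List.mem_cons,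
        List.not_mem_nil, or_false] at h
      rcases h with h | h | h
      all_goals (rw [Sym2.eq_iff] at h; rcases h with ⟨h1, h2⟩ | ⟨h1, h2⟩ <;> subst_vars <;>
        simp_all [SimpleGraph.irrefl])
  · simp only [SimpleGraph.Walk.edges_cons, List.mem_cons]
    right; right; right; left
    rw [Sym2.eq_iff]; right; exact ⟨rfl, rfl⟩

lemma no_pent (h5 : ¬ EdgeInCycleOfLength G x y 5) (hxy : G.Adj x y)
    {u z v : V} (hxu : G.Adj x u) (huz : G.Adj u z) (hzv : G.Adj z v) (hvy : G.Adj v y)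
    (huy : u ≠ y) (hvx : v ≠ x) (hzx : z ≠ x) (hzy : z ≠ y) (huv : u ≠ v) : False := by
  apply h5
  refine ⟨x, SimpleGraph.Walk.cons hxu (SimpleGraph.Walk.cons huz
    (SimpleGraph.Walk.cons hzv (SimpleGraph.Walk.cons hvy
    (SimpleGraph.Walk.cons hxy.symm SimpleGraph.Walk.nil)))), ?_, by simp, ?_⟩
  · rw [SimpleGraph.Walk.cons_isCycle_iff]
    refine ⟨?_, ?_⟩
    · simp [SimpleGraph.Walk.isPath_def, huz.ne, huv, huy, hxu.ne', hzv.ne, hzy, hzx,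
        hvy.ne, hvx, hxy.ne']
    · intro h
      simp only [SimpleGraph.Walk.edges_cons, SimpleGraph.Walk.edges_nil, List.mem_cons,
        List.not_mem_nil, or_false] at h
      rcases h with h | h | h | h
      all_goals (rw [Sym2.eq_iff] at h; rcases h with ⟨h1, h2⟩ | ⟨h1, h2⟩ <;> subst_vars <;>
        simp_all [SimpleGraph.irrefl])
  · simp only [SimpleGraph.Walk.edges_cons, List.mem_cons]
    right; right; right; right; left
    rw [Sym2.eq_iff]; right; exact ⟨rfl, rfl⟩

end Cycles






section Dist
variable {G : SimpleGraph V} {x y : V}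

lemma dist_two_aux (hconn : G.Connected) {u v : V} (hne : u ≠ v) (hnadj : ¬ G.Adj u v)
    (hle : G.dist u v ≤ 2) : G.dist u v = 2 := by
  have h0 : G.dist u v ≠ 0 := fun hd => hne (hconn.dist_eq_zero_iff.mp hd)
  have h1 : G.dist u v ≠ 1 := fun hd => hnadj (SimpleGraph.dist_eq_one_iff_adj.mp hd)
  omega

lemma dist_three_aux (hconn : G.Connected) {u v : V} (hne : u ≠ v) (hnadj : ¬ G.Adj u v)
    (hmid : ∀ z, G.Adj u z → G.Adj z v → False) (hle : G.dist u v ≤ 3) : G.dist u v = 3 := by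
  have h0 : G.dist u v ≠ 0 := fun hd => hne (hconn.dist_eq_zero_iff.mp hd)
  have h1 : G.dist u v ≠ 1 := fun hd => hnadj (SimpleGraph.dist_eq_one_iff_adj.mp hd)
  have h2 : G.dist u v ≠ 2 := by
    intro hd
    obtain ⟨p, hp⟩ := (hconn u v).exists_walk_length_eq_dist
    rw [hd] at hp
    cases p with
    | nil => simp at hp
    | cons h q =>
      cases q with
      | nil => simp at hp
      | cons h2 q2 =>
        have hq2 : q2.length = 0 := by simp only [SimpleGraph.Walk.length_cons] at hp; omega
        have := SimpleGraph.Walk.eq_of_length_eq_zero hq2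
        subst this
        exact hmid _ h h2
  omega

lemma dist_Xy (hconn : G.Connected) (hxy : G.Adj x y) (h3 : ¬ EdgeInCycleOfLength G x y 3) {u : V}
    (hu1 : G.Adj x u) (hu2 : u ≠ y) : G.dist u y = 2 := by
  refine dist_two_aux hconn hu2 (fun h => no_tri h3 hxy hu1 h) ?_
  have := SimpleGraph.dist_le (SimpleGraph.Walk.cons hu1.symm
    (SimpleGraph.Walk.cons hxy SimpleGraph.Walk.nil))
  simpa using this

lemma dist_xY (hconn : G.Connected) (hxy : G.Adj x y) (h3 : ¬ EdgeInCycleOfLength G x y 3) {v : V}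
    (hv1 : G.Adj y v) (hv2 : v ≠ x) : G.dist x v = 2 := by
  refine dist_two_aux hconn hv2.symm (fun h => no_tri h3 hxy h hv1.symm) ?_
  have := SimpleGraph.dist_le (SimpleGraph.Walk.cons hxy
    (SimpleGraph.Walk.cons hv1 SimpleGraph.Walk.nil))
  simpa using this

lemma dist_XY (hconn : G.Connected) (hxy : G.Adj x y) (h3 : ¬ EdgeInCycleOfLength G x y 3) (h4 : ¬ EdgeInCycleOfLength G x y 4)
    (h5 : ¬ EdgeInCycleOfLength G x y 5) {u v : V}
    (hu1 : G.Adj x u) (hu2 : u ≠ y) (hv1 : G.Adj y v) (hv2 : v ≠ x) : G.dist u v = 3 := by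
  have hunev : u ≠ v := by
    rintro rfl
    exact no_tri h3 hxy hu1 hv1.symm
  refine dist_three_aux hconn hunev
    (fun h => no_quad h4 hxy hu1 h hv1.symm hu2 hv2) ?_ ?_
  · intro z huz hzv
    have hzx : z ≠ x := by rintro rfl; exact no_tri h3 hxy hzv hv1.symm
    have hzy : z ≠ y := by rintro rfl; exact no_tri h3 hxy hu1 huz
    exact no_pent h5 hxy hu1 huz hzv hv1.symm hu2 hv2 hzx hzy hunev
  · have := SimpleGraph.dist_le (SimpleGraph.Walk.cons hu1.symm (SimpleGraph.Walk.cons hxy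
      (SimpleGraph.Walk.cons hv1 SimpleGraph.Walk.nil)))
    simpa using this

end Dist


section Mass
variable {G : SimpleGraph V} {x u : V} {α : ℝ}

lemma deg_eq_card (G : SimpleGraph V) [G.LocallyFinite] (x : V) :
    deg G x = (G.neighborFinset x).card := by
  rw [deg, Set.ncard_eq_toFinset_card', SimpleGraph.neighborFinset_def]

lemma mass_apply_self : mass G α x x = α := by simp [mass]

lemma mass_apply_adj (h : G.Adj x u) : mass G α x u = (1 - α) / (deg G x : ℝ) := by
  simp [mass, h, h.ne']

lemma mass_apply_eq_zero (h1 : u ≠ x) (h2 : ¬ G.Adj x u) : mass G α x u = 0 := by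
  simp [mass, h1, h2]

lemma mass_ne_zero (h : mass G α x u ≠ 0) : u = x ∨ G.Adj x u := by
  by_contra hc
  push_neg at hc
  exact h (mass_apply_eq_zero hc.1 hc.2)

end Mass

section Main
variable {G : SimpleGraph V} [G.LocallyFinite] {x y : V}

set_option maxHeartbeats 2000000 in
lemma W_value (hconn : G.Connected) (hxy : G.Adj x y)
    (h3 : ¬ EdgeInCycleOfLength G x y 3) (h4 : ¬ EdgeInCycleOfLength G x y 4)
    (h5 : ¬ EdgeInCycleOfLength G x y 5) {α : ℝ} (hα1 : 1/2 < α) (hα2 : α < 1) :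
    W G (mass G α x) (mass G α y)
      = α + 3*(1-α) - 2*(1-α)/(deg G x : ℝ) - 2*(1-α)/(deg G y : ℝ) := by
  classical
  set β : ℝ := 1 - α with hβ
  set dx : ℝ := (deg G x : ℝ) with hdx
  set dy : ℝ := (deg G y : ℝ) with hdy
  have hβpos : 0 < β := by rw [hβ]; linarith
  have hβα : β < α := by rw [hβ]; linarith
  have hαpos : 0 < α := by linarith
  have hyx : G.Adj y x := hxy.symm
  -- degrees
  have hyNx : y ∈ G.neighborFinset x := (SimpleGraph.mem_neighborFinset G x y).mpr hxy
  have hxNy : x ∈ G.neighborFinset y := (SimpleGraph.mem_neighborFinset G y x).mpr hyx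
  have hdegx1 : 1 ≤ deg G x := by
    rw [deg_eq_card]; exact Finset.card_pos.mpr ⟨y, hyNx⟩
  have hdegy1 : 1 ≤ deg G y := by
    rw [deg_eq_card]; exact Finset.card_pos.mpr ⟨x, hxNy⟩
  have hdx1 : (1:ℝ) ≤ dx := by rw [hdx]; exact_mod_cast hdegx1
  have hdy1 : (1:ℝ) ≤ dy := by rw [hdy]; exact_mod_cast hdegy1
  have hdxpos : 0 < dx := by linarith
  have hdypos : 0 < dy := by linarith
  have hdxne : dx ≠ 0 := ne_of_gt hdxpos
  have hdyne : dy ≠ 0 := ne_of_gt hdypos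
  have hβdx : β / dx ≤ β := div_le_self hβpos.le hdx1
  have hβdy : β / dy ≤ β := div_le_self hβpos.le hdy1
  have hβdxpos : 0 < β / dx := div_pos hβpos hdxpos
  have hβdypos : 0 < β / dy := div_pos hβpos hdypos
  -- the finsets
  set X : Finset V := G.neighborFinset x \ {y} with hXdef
  set Y : Finset V := G.neighborFinset y \ {x} with hYdef
  have hmemX : ∀ u, u ∈ X ↔ G.Adj x u ∧ u ≠ y := by
    intro u; simp [hXdef, SimpleGraph.mem_neighborFinset]
  have hmemY : ∀ v, v ∈ Y ↔ G.Adj y v ∧ v ≠ x := by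
    intro v; simp [hYdef, SimpleGraph.mem_neighborFinset]
  have hxX : x ∉ X := fun h => G.loopless.irrefl x ((hmemX x).mp h).1
  have hyX : y ∉ X := fun h => ((hmemX y).mp h).2 rfl
  have hxY : x ∉ Y := fun h => ((hmemY x).mp h).2 rfl
  have hyY : y ∉ Y := fun h => G.loopless.irrefl y ((hmemY y).mp h).1
  have hXY : ∀ u ∈ X, u ∉ Y := by
    intro u hu hv
    exact no_tri h3 hxy ((hmemX u).mp hu).1 (((hmemY u).mp hv).1.symm)
  have hdisj : Disjoint X Y := Finset.disjoint_left.mpr hXY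
  have hcardX : (X.card : ℝ) = dx - 1 := by
    have h1 : {y} ⊆ G.neighborFinset x := Finset.singleton_subset_iff.mpr hyNx
    have hc : X.card = deg G x - 1 := by
      rw [hXdef, Finset.card_sdiff_of_subset h1, Finset.card_singleton, deg_eq_card]
    rw [hc, Nat.cast_sub hdegx1, Nat.cast_one, hdx]
  have hcardY : (Y.card : ℝ) = dy - 1 := by
    have h1 : {x} ⊆ G.neighborFinset y := Finset.singleton_subset_iff.mpr hxNy
    have hc : Y.card = deg G y - 1 := by
      rw [hYdef, Finset.card_sdiff_of_subset h1, Finset.card_singleton, deg_eq_card]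
    rw [hc, Nat.cast_sub hdegy1, Nat.cast_one, hdy]
  -- the big finset S and sums over it
  set S : Finset V := insert x (insert y (X ∪ Y)) with hSdef
  have hxS : x ∈ S := by simp [hSdef]
  have hyS : y ∈ S := by simp [hSdef]
  have hXS : ∀ u ∈ X, u ∈ S := by intro u hu; simp [hSdef, hu]
  have hYS : ∀ v ∈ Y, v ∈ S := by intro v hv; simp [hSdef, hv]
  have hxnotin : x ∉ insert y (X ∪ Y) := by
    simp only [Finset.mem_insert, Finset.mem_union]
    push_neg
    exact ⟨hxy.ne, hxX, hxY⟩
  have hynotin : y ∉ X ∪ Y := by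
    simp only [Finset.mem_union]
    push_neg
    exact ⟨hyX, hyY⟩
  have hsumS : ∀ h : V → ℝ, ∑ v ∈ S, h v = h x + h y + ∑ v ∈ X, h v + ∑ v ∈ Y, h v := by
    intro h
    rw [hSdef, Finset.sum_insert hxnotin, Finset.sum_insert hynotin, Finset.sum_union hdisj]
    ring
  have hXsum : ∀ (h : V → ℝ) (w : ℝ), (∀ u ∈ X, h u = w) → ∑ u ∈ X, h u = (dx - 1) * w := by
    intro h w hw
    rw [Finset.sum_congr rfl hw, Finset.sum_const, nsmul_eq_mul, hcardX]
  have hYsum : ∀ (h : V → ℝ) (w : ℝ), (∀ v ∈ Y, h v = w) → ∑ v ∈ Y, h v = (dy - 1) * w := by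
    intro h w hw
    rw [Finset.sum_congr rfl hw, Finset.sum_const, nsmul_eq_mul, hcardY]
  -- mass values
  have hm1x : mass G α x x = α := mass_apply_self
  have hm1y : mass G α x y = β / dx := by rw [hβ, hdx]; exact mass_apply_adj hxy
  have hm1X : ∀ u ∈ X, mass G α x u = β / dx := by
    intro u hu; rw [hβ, hdx]; exact mass_apply_adj ((hmemX u).mp hu).1
  have hm1Y : ∀ v ∈ Y, mass G α x v = 0 := by
    intro v hv
    refine mass_apply_eq_zero (((hmemY v).mp hv).2) ?_
    intro hadj
    exact no_tri h3 hxy hadj (((hmemY v).mp hv).1.symm)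
  have hm1out : ∀ u, u ∉ S → mass G α x u = 0 := by
    intro u hu
    simp only [hSdef, Finset.mem_insert, Finset.mem_union] at hu
    push_neg at hu
    refine mass_apply_eq_zero hu.1 ?_
    intro hadj
    exact hu.2.2.1 ((hmemX u).mpr ⟨hadj, hu.2.1⟩)
  have hm2y : mass G α y y = α := mass_apply_self
  have hm2x : mass G α y x = β / dy := by rw [hβ, hdy]; exact mass_apply_adj hyx
  have hm2Y : ∀ v ∈ Y, mass G α y v = β / dy := by
    intro v hv; rw [hβ, hdy]; exact mass_apply_adj ((hmemY v).mp hv).1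
  have hm2X : ∀ u ∈ X, mass G α y u = 0 := by
    intro u hu
    refine mass_apply_eq_zero (((hmemX u).mp hu).2) ?_
    intro hadj
    exact no_tri h3 hxy ((hmemX u).mp hu).1 hadj.symm
  have hm2out : ∀ v, v ∉ S → mass G α y v = 0 := by
    intro v hv
    simp only [hSdef, Finset.mem_insert, Finset.mem_union] at hv
    push_neg at hv
    refine mass_apply_eq_zero hv.2.1 ?_
    intro hadj
    exact hv.2.2.2 ((hmemY v).mpr ⟨hadj, hv.1⟩)
  -- distance values
  have hdistxy : (G.dist x y : ℝ) = 1 := by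
    rw [SimpleGraph.dist_eq_one_iff_adj.mpr hxy]; norm_num
  have hdistxY : ∀ v ∈ Y, (G.dist x v : ℝ) = 2 := by
    intro v hv
    rw [dist_xY hconn hxy h3 ((hmemY v).mp hv).1 ((hmemY v).mp hv).2]; norm_num
  have hdistXy : ∀ u ∈ X, (G.dist u y : ℝ) = 2 := by
    intro u hu
    rw [dist_Xy hconn hxy h3 ((hmemX u).mp hu).1 ((hmemX u).mp hu).2]; norm_num
  have hdistXY : ∀ u ∈ X, ∀ v ∈ Y, (G.dist u v : ℝ) = 3 := by
    intro u hu v hv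
    rw [dist_XY hconn hxy h3 h4 h5 ((hmemX u).mp hu).1 ((hmemX u).mp hu).2
      ((hmemY v).mp hv).1 ((hmemY v).mp hv).2]; norm_num
  -- value
  have key : ∀ cc, (cc ∈ {c | ∃ A : V → V → ℝ, IsCoupling (mass G α x) (mass G α y) A ∧
      c = ∑ᶠ p : V × V, A p.1 p.2 * (G.dist p.1 p.2 : ℝ)}) → α + 3*β - 2*β/dx - 2*β/dy ≤ cc := by
    intro cc hcc
    obtain ⟨A, ⟨hApos, hAfin, hArow, hAcol⟩, rfl⟩ := hcc
    set f : V → ℝ := fun u => if u = x then 2 else if u = y then 1 else if u ∈ Y then 0 else 3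
      with hf
    have hfx : f x = 2 := by simp [hf]
    have hfy : f y = 1 := by simp [hf, hxy.ne']
    have hfY : ∀ v ∈ Y, f v = 0 := by
      intro v hv
      have h1 : v ≠ x := ((hmemY v).mp hv).2
      have h2 : v ≠ y := fun h => hyY (h ▸ hv)
      simp [hf, h1, h2, hv]
    have hfX : ∀ u ∈ X, f u = 3 := by
      intro u hu
      have h1 : u ≠ x := fun h => hxX (h ▸ hu)
      have h2 : u ≠ y := ((hmemX u).mp hu).2
      have h3' : u ∉ Y := hXY u hu
      simp [hf, h1, h2, h3']
    have hfd : ∀ u v, mass G α x u ≠ 0 → mass G α y v ≠ 0 →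
        f u - f v ≤ (G.dist u v : ℝ) := by
      intro u v hu hv
      rcases mass_ne_zero hu with hux | hu'
      · rw [hux]
        rcases mass_ne_zero hv with hvy | hv'
        · rw [hvy, hfx, hfy, hdistxy]; norm_num
        · by_cases hvx : v = x
          · rw [hvx]; simp [SimpleGraph.dist_self]
          · have hvY : v ∈ Y := (hmemY v).mpr ⟨hv', hvx⟩
            rw [hfx, hfY v hvY, hdistxY v hvY]; norm_num
      · by_cases huy : u = y
        · rw [huy]
          rcases mass_ne_zero hv with hvy | hv'
          · rw [hvy]; simp [SimpleGraph.dist_self]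
          · by_cases hvx : v = x
            · rw [hvx, hfy, hfx]
              have h0 : (0:ℝ) ≤ (G.dist y x : ℝ) := Nat.cast_nonneg _
              linarith
            · have hvY : v ∈ Y := (hmemY v).mpr ⟨hv', hvx⟩
              rw [hfy, hfY v hvY, SimpleGraph.dist_eq_one_iff_adj.mpr hv']
              norm_num
        · have huX : u ∈ X := (hmemX u).mpr ⟨hu', huy⟩
          rw [hfX u huX]
          rcases mass_ne_zero hv with hvy | hv'
          · rw [hvy, hfy, hdistXy u huX]; norm_num
          · by_cases hvx : v = x
            · rw [hvx, hfx, SimpleGraph.dist_eq_one_iff_adj.mpr hu'.symm]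
              norm_num
            · have hvY : v ∈ Y := (hmemY v).mpr ⟨hv', hvx⟩
              rw [hfY v hvY, hdistXY u huX v hvY]; norm_num
    set P1 : Finset V := S ∪ hAfin.toFinset.image Prod.fst with hP1
    set P2 : Finset V := S ∪ hAfin.toFinset.image Prod.snd with hP2
    have hSP1 : S ⊆ P1 := Finset.subset_union_left
    have hSP2 : S ⊆ P2 := Finset.subset_union_left
    have hsupp1 : ∀ u v, A u v ≠ 0 → u ∈ P1 := by
      intro u v h
      have hm : (u, v) ∈ hAfin.toFinset := by
        rw [Set.Finite.mem_toFinset]; exact h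
      exact Finset.mem_union_right _ (Finset.mem_image.mpr ⟨(u, v), hm, rfl⟩)
    have hsupp2 : ∀ u v, A u v ≠ 0 → v ∈ P2 := by
      intro u v h
      have hm : (u, v) ∈ hAfin.toFinset := by
        rw [Set.Finite.mem_toFinset]; exact h
      exact Finset.mem_union_right _ (Finset.mem_image.mpr ⟨(u, v), hm, rfl⟩)
    have hrowP : ∀ u, ∑ v ∈ P2, A u v = mass G α x u := by
      intro u
      rw [← hArow u]
      exact (finsum_eq_sum_of_support_subset _
        (fun v hv => Finset.mem_coe.mpr (hsupp2 u v hv))).symm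
    have hcolP : ∀ v, ∑ u ∈ P1, A u v = mass G α y v := by
      intro v
      rw [← hAcol v]
      exact (finsum_eq_sum_of_support_subset _
        (fun u hu => Finset.mem_coe.mpr (hsupp1 u v hu))).symm
    have hcc2 : ∑ᶠ p : V × V, A p.1 p.2 * (G.dist p.1 p.2 : ℝ)
        = ∑ u ∈ P1, ∑ v ∈ P2, A u v * (G.dist u v : ℝ) := by
      rw [finsum_eq_sum_of_support_subset _ (s := P1 ×ˢ P2) ?_, Finset.sum_product]
      intro p hp
      have hA : A p.1 p.2 ≠ 0 := left_ne_zero_of_mul hp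
      exact Finset.mem_coe.mpr (Finset.mem_product.mpr ⟨hsupp1 _ _ hA, hsupp2 _ _ hA⟩)
    rw [hcc2]
    have step1 : ∑ u ∈ P1, (mass G α x u) * f u - ∑ v ∈ P2, (mass G α y v) * f v
        ≤ ∑ u ∈ P1, ∑ v ∈ P2, A u v * (G.dist u v : ℝ) := by
      have e1 : ∑ u ∈ P1, (mass G α x u) * f u = ∑ u ∈ P1, ∑ v ∈ P2, A u v * f u := by
        refine Finset.sum_congr rfl fun u _ => ?_
        rw [← hrowP u, Finset.sum_mul]
      have e2 : ∑ v ∈ P2, (mass G α y v) * f v = ∑ u ∈ P1, ∑ v ∈ P2, A u v * f v := by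
        rw [Finset.sum_comm]
        refine Finset.sum_congr rfl fun v _ => ?_
        rw [← hcolP v, Finset.sum_mul]
      rw [e1, e2, ← Finset.sum_sub_distrib]
      refine Finset.sum_le_sum fun u hu => ?_
      rw [← Finset.sum_sub_distrib]
      refine Finset.sum_le_sum fun v hv => ?_
      rw [← mul_sub]
      by_cases hA : A u v = 0
      · simp [hA]
      · have hm1 : mass G α x u ≠ 0 := by
          rw [← hrowP u]
          have hpos : 0 < A u v := (hApos u v).lt_of_ne (Ne.symm hA)
          have hle : A u v ≤ ∑ v' ∈ P2, A u v' :=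
            Finset.single_le_sum (fun i _ => hApos u i) hv
          exact ne_of_gt (lt_of_lt_of_le hpos hle)
        have hm2 : mass G α y v ≠ 0 := by
          rw [← hcolP v]
          have hpos : 0 < A u v := (hApos u v).lt_of_ne (Ne.symm hA)
          have hle : A u v ≤ ∑ u' ∈ P1, A u' v :=
            Finset.single_le_sum (fun i _ => hApos i v) hu
          exact ne_of_gt (lt_of_lt_of_le hpos hle)
        exact mul_le_mul_of_nonneg_left (hfd u v hm1 hm2) (hApos u v)
    refine le_trans (le_of_eq ?_) step1
    have hsum1 : ∑ u ∈ P1, (mass G α x u) * f u = 2*α + β/dx + (dx-1)*(β/dx*3) := by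
      rw [← Finset.sum_subset hSP1 (fun u _ hu => by rw [hm1out u hu, zero_mul])]
      rw [hsumS, hm1x, hm1y, hfx, hfy]
      rw [hXsum _ (β/dx*3) (fun u hu => by rw [hm1X u hu, hfX u hu])]
      rw [hYsum _ 0 (fun v hv => by rw [hm1Y v hv, zero_mul])]
      ring
    have hsum2 : ∑ v ∈ P2, (mass G α y v) * f v = β/dy*2 + α := by
      rw [← Finset.sum_subset hSP2 (fun v _ hv => by rw [hm2out v hv, zero_mul])]
      rw [hsumS, hm2x, hm2y, hfx, hfy]
      rw [hXsum _ 0 (fun u hu => by rw [hm2X u hu, zero_mul])]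
      rw [hYsum _ 0 (fun v hv => by rw [hfY v hv, mul_zero])]
      ring
    rw [hsum1, hsum2]
    field_simp
    ring
  have hub : (α + 3*β - 2*β/dx - 2*β/dy) ∈ {c | ∃ A : V → V → ℝ,
      IsCoupling (mass G α x) (mass G α y) A ∧
      c = ∑ᶠ p : V × V, A p.1 p.2 * (G.dist p.1 p.2 : ℝ)} := by
    have hTpos : 0 < α + β - β/dx - β/dy := by linarith
    set T : ℝ := α + β - β/dx - β/dy with hT
    have hTne : T ≠ 0 := ne_of_gt hTpos
    set r : V → ℝ := fun u => if u = x then α - β/dy else if u ∈ X then β/dx else 0 with hr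
    set c : V → ℝ := fun v => if v = y then α - β/dx else if v ∈ Y then β/dy else 0 with hc
    have hrx : r x = α - β/dy := by simp [hr]
    have hry : r y = 0 := by simp [hr, hxy.ne', hyX]
    have hrX : ∀ u ∈ X, r u = β/dx := by
      intro u hu
      have h1 : u ≠ x := fun h => hxX (h ▸ hu)
      simp [hr, h1, hu]
    have hrY : ∀ u ∈ Y, r u = 0 := by
      intro u hu
      have h1 : u ≠ x := ((hmemY u).mp hu).2
      have h2 : u ∉ X := fun h => hXY u h hu
      simp [hr, h1, h2]
    have hrnn : ∀ u, 0 ≤ r u := by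
      intro u
      rw [hr]
      dsimp only
      split_ifs
      · linarith
      · exact hβdxpos.le
      · exact le_rfl
    have hcy : c y = α - β/dx := by simp [hc]
    have hcx : c x = 0 := by simp [hc, hxy.ne, hxY]
    have hcX : ∀ u ∈ X, c u = 0 := by
      intro u hu
      have h1 : u ≠ y := ((hmemX u).mp hu).2
      have h2 : u ∉ Y := hXY u hu
      simp [hc, h1, h2]
    have hcY : ∀ v ∈ Y, c v = β/dy := by
      intro v hv
      have h1 : v ≠ y := fun h => hyY (h ▸ hv)
      simp [hc, h1, hv]
    have hcnn : ∀ v, 0 ≤ c v := by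
      intro v
      rw [hc]
      dsimp only
      split_ifs
      · linarith
      · exact hβdypos.le
      · exact le_rfl
    have hsumr : ∑ u ∈ S, r u = T := by
      rw [hsumS, hrx, hry, hXsum _ (β/dx) hrX, hYsum _ 0 hrY, hT]
      field_simp
      ring
    have hsumc : ∑ v ∈ S, c v = T := by
      rw [hsumS, hcx, hcy, hXsum _ 0 hcX, hYsum _ (β/dy) hcY, hT]
      field_simp
      ring
    set A : V → V → ℝ := fun u v =>
      (if u = x then (if v = x then β/dy else 0) else 0)
      + (if u = y then (if v = y then β/dx else 0) else 0)
      + r u * c v / T with hA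
    have hAnn : ∀ u v, 0 ≤ A u v := by
      intro u v
      rw [hA]
      dsimp only
      have h1 := hrnn u
      have h2 := hcnn v
      refine add_nonneg (add_nonneg ?_ ?_) (by positivity)
      · split_ifs
        · exact hβdypos.le
        · exact le_rfl
        · exact le_rfl
      · split_ifs
        · exact hβdxpos.le
        · exact le_rfl
        · exact le_rfl
    have hAleft : ∀ u v, u ∉ S → A u v = 0 := by
      intro u v hu
      have h1 : u ≠ x := fun h => hu (h ▸ hxS)
      have h2 : u ≠ y := fun h => hu (h ▸ hyS)
      have h3' : u ∉ X := fun h => hu (hXS u h)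
      rw [hA]
      dsimp only
      simp [h1, h2, h3', hr]
    have hAright : ∀ u v, v ∉ S → A u v = 0 := by
      intro u v hv
      have h1 : v ≠ x := fun h => hv (h ▸ hxS)
      have h2 : v ≠ y := fun h => hv (h ▸ hyS)
      have h3' : v ∉ Y := fun h => hv (hYS v h)
      rw [hA]
      dsimp only
      simp [h1, h2, h3', hc]
    have hAsupp : (Function.support fun p : V × V => A p.1 p.2) ⊆ ↑(S ×ˢ S) := by
      intro p hp
      simp only [Function.mem_support] at hp
      refine Finset.mem_coe.mpr (Finset.mem_product.mpr ⟨?_, ?_⟩)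
      · by_contra h; exact hp (hAleft _ _ h)
      · by_contra h; exact hp (hAright _ _ h)
    have hrowsum : ∀ u, ∑ᶠ v, A u v = mass G α x u := by
      intro u
      have hsub : (Function.support fun v => A u v) ⊆ ↑S := by
        intro v hv
        simp only [Function.mem_support] at hv
        by_contra h
        exact hv (hAright u v h)
      rw [finsum_eq_sum_of_support_subset _ hsub]
      have hsplit : ∑ v ∈ S, A u v
          = (if u = x then β/dy else 0) + (if u = y then β/dx else 0) + r u := by
        rw [hA]
        dsimp only
        rw [Finset.sum_add_distrib, Finset.sum_add_distrib]
        congr 1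
        · congr 1
          · by_cases h1 : u = x
            · simp [h1, Finset.sum_ite_eq', hxS]
            · simp [h1]
          · by_cases h2 : u = y
            · simp [h2, Finset.sum_ite_eq', hyS]
            · simp [h2]
        · rw [← Finset.sum_div, ← Finset.mul_sum, hsumc, mul_div_assoc, div_self hTne,
            mul_one]
      rw [hsplit]
      by_cases h1 : u = x
      · rw [h1, hrx, hm1x, if_pos rfl, if_neg hxy.ne]
        ring
      · by_cases h2 : u = y
        · rw [h2, hry, hm1y, if_neg hxy.ne', if_pos rfl]
          ring
        · rw [if_neg h1, if_neg h2]
          by_cases h3' : u ∈ X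
          · rw [hrX u h3', hm1X u h3']
            ring
          · have hru : r u = 0 := by simp [hr, h1, h3']
            have hmu : mass G α x u = 0 :=
              mass_apply_eq_zero h1 (fun hadj => h3' ((hmemX u).mpr ⟨hadj, h2⟩))
            rw [hru, hmu]
            ring
    have hcolsum : ∀ v, ∑ᶠ u, A u v = mass G α y v := by
      intro v
      have hsub : (Function.support fun u => A u v) ⊆ ↑S := by
        intro u hu
        simp only [Function.mem_support] at hu
        by_contra h
        exact hu (hAleft u v h)
      rw [finsum_eq_sum_of_support_subset _ hsub]
      have hsplit : ∑ u ∈ S, A u v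
          = (if v = x then β/dy else 0) + (if v = y then β/dx else 0) + c v := by
        rw [hA]
        dsimp only
        rw [Finset.sum_add_distrib, Finset.sum_add_distrib]
        congr 1
        · congr 1
          · by_cases h1 : v = x
            · simp [h1, Finset.sum_ite_eq', hxS]
            · simp [h1]
          · by_cases h2 : v = y
            · simp [h2, Finset.sum_ite_eq', hyS]
            · simp [h2]
        · have : ∀ u ∈ S, r u * c v / T = c v / T * r u := fun u _ => by ring
          rw [Finset.sum_congr rfl this, ← Finset.mul_sum, hsumr, mul_comm (c v / T) T,
            mul_div_assoc']
          field_simp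
      rw [hsplit]
      by_cases h1 : v = x
      · rw [h1, hcx, hm2x, if_pos rfl, if_neg hxy.ne]
        ring
      · by_cases h2 : v = y
        · rw [h2, hcy, hm2y, if_neg hxy.ne', if_pos rfl]
          ring
        · rw [if_neg h1, if_neg h2]
          by_cases h3' : v ∈ Y
          · rw [hcY v h3', hm2Y v h3']
            ring
          · have hcv : c v = 0 := by simp [hc, h2, h3']
            have hmv : mass G α y v = 0 :=
              mass_apply_eq_zero h2 (fun hadj => h3' ((hmemY v).mpr ⟨hadj, h1⟩))
            rw [hcv, hmv]
            ring
    refine ⟨A, ⟨hAnn, Set.Finite.subset (S ×ˢ S).finite_toSet hAsupp, hrowsum, hcolsum⟩, ?_⟩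
    have hsupp2 : (Function.support fun p : V × V => A p.1 p.2 * (G.dist p.1 p.2 : ℝ))
        ⊆ ↑(S ×ˢ S) := by
      intro p hp
      simp only [Function.mem_support] at hp
      exact hAsupp (left_ne_zero_of_mul hp)
    rw [finsum_eq_sum_of_support_subset _ hsupp2, Finset.sum_product]
    have expand : ∀ u ∈ S, ∑ v ∈ S, A u v * (G.dist u v : ℝ)
        = ∑ v ∈ S, ((if u = x then (if v = x then β/dy else 0) else 0) * (G.dist u v : ℝ)
          + (if u = y then (if v = y then β/dx else 0) else 0) * (G.dist u v : ℝ)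
          + (r u / T) * (c v * (G.dist u v : ℝ))) := by
      intro u _
      refine Finset.sum_congr rfl fun v _ => ?_
      rw [hA]
      dsimp only
      ring
    rw [Finset.sum_congr rfl expand]
    have step : ∀ u ∈ S, ∑ v ∈ S,
        ((if u = x then (if v = x then β/dy else 0) else 0) * (G.dist u v : ℝ)
          + (if u = y then (if v = y then β/dx else 0) else 0) * (G.dist u v : ℝ)
          + (r u / T) * (c v * (G.dist u v : ℝ)))
        = (r u / T) * (∑ v ∈ S, c v * (G.dist u v : ℝ)) := by
      intro u _
      rw [Finset.sum_add_distrib, Finset.sum_add_distrib, ← Finset.mul_sum]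
      have z1 : ∑ v ∈ S, (if u = x then (if v = x then β/dy else 0) else 0)
          * (G.dist u v : ℝ) = 0 := by
        refine Finset.sum_eq_zero fun v _ => ?_
        by_cases h1 : u = x
        · by_cases h2 : v = x
          · simp [h1, h2, SimpleGraph.dist_self]
          · simp [h1, h2]
        · simp [h1]
      have z2 : ∑ v ∈ S, (if u = y then (if v = y then β/dx else 0) else 0)
          * (G.dist u v : ℝ) = 0 := by
        refine Finset.sum_eq_zero fun v _ => ?_
        by_cases h1 : u = y
        · by_cases h2 : v = y
          · simp [h1, h2, SimpleGraph.dist_self]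
          · simp [h1, h2]
        · simp [h1]
      rw [z1, z2]
      ring
    rw [Finset.sum_congr rfl step]
    have hgx : ∑ v ∈ S, c v * (G.dist x v : ℝ) = (α - β/dx) * 1 + (dy-1) * (β/dy * 2) := by
      rw [hsumS, hcx, hcy, hdistxy]
      rw [hXsum _ 0 (fun w hw => by rw [hcX w hw, zero_mul])]
      rw [hYsum _ (β/dy * 2) (fun v hv => by rw [hcY v hv, hdistxY v hv])]
      simp [SimpleGraph.dist_self]
    have hgX : ∀ u ∈ X, ∑ v ∈ S, c v * (G.dist u v : ℝ)
        = (α - β/dx) * 2 + (dy-1) * (β/dy * 3) := by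
      intro u hu
      rw [hsumS, hcx, hcy, hdistXy u hu]
      rw [hXsum _ 0 (fun w hw => by rw [hcX w hw, zero_mul])]
      rw [hYsum _ (β/dy * 3) (fun v hv => by rw [hcY v hv, hdistXY u hu v hv])]
      ring
    rw [hsumS]
    rw [hrx, hry, hgx]
    rw [hXsum _ ((β/dx) / T * ((α - β/dx) * 2 + (dy-1) * (β/dy * 3)))
      (fun u hu => by rw [hrX u hu, hgX u hu])]
    rw [hYsum _ 0 (fun v hv => by rw [hrY v hv, zero_div, zero_mul])]
    have key2 : (α + 3*β - 2*β/dx - 2*β/dy) * T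
        = (α - β/dy) * ((α - β/dx) * 1 + (dy-1) * (β/dy * 2))
          + (dx-1) * (β/dx * ((α - β/dx) * 2 + (dy-1) * (β/dy * 3))) := by
      rw [hT]
      field_simp
      ring
    rw [show α + 3*β - 2*β/dx - 2*β/dy
        = ((α + 3*β - 2*β/dx - 2*β/dy) * T) / T from (mul_div_cancel_right₀ _ hTne).symm]
    rw [key2]
    ring
  have : W G (mass G α x) (mass G α y) = α + 3*β - 2*β/dx - 2*β/dy := by
    refine le_antisymm ?_ ?_
    · exact csInf_le ⟨_, fun c hc => key c hc⟩ hub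
    · exact le_csInf ⟨_, hub⟩ key
  rw [this]

end Main


/-- If an edge `xy` is not contained in any cycle of length
3, 4 or 5, then `κ(x,y) = 2/d_x + 2/d_y - 2`. -/
theorem ricci_eq_of_no_short_cycle
    {V : Type*} (G : SimpleGraph V) [G.LocallyFinite] (hconn : G.Connected)
    {x y : V} (hxy : G.Adj x y)
    (h3 : ¬ EdgeInCycleOfLength G x y 3)
    (h4 : ¬ EdgeInCycleOfLength G x y 4)
    (h5 : ¬ EdgeInCycleOfLength G x y 5) :
    ricci G x y = 2 / (deg G x : ℝ) + 2 / (deg G y : ℝ) - 2 := by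
  have hyNx : y ∈ G.neighborFinset x := (SimpleGraph.mem_neighborFinset G x y).mpr hxy
  have hxNy : x ∈ G.neighborFinset y := (SimpleGraph.mem_neighborFinset G y x).mpr hxy.symm
  have hdegx1 : 1 ≤ deg G x := by
    rw [deg_eq_card]; exact Finset.card_pos.mpr ⟨y, hyNx⟩
  have hdegy1 : 1 ≤ deg G y := by
    rw [deg_eq_card]; exact Finset.card_pos.mpr ⟨x, hxNy⟩
  have hdx0 : (deg G x : ℝ) ≠ 0 := by
    have : (1:ℝ) ≤ (deg G x : ℝ) := by exact_mod_cast hdegx1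
    linarith
  have hdy0 : (deg G y : ℝ) ≠ 0 := by
    have : (1:ℝ) ≤ (deg G y : ℝ) := by exact_mod_cast hdegy1
    linarith
  have hev : (fun α => kappaAlpha G α x y / (1 - α)) =ᶠ[𝓝[<] (1:ℝ)]
      (fun _ => 2 / (deg G x : ℝ) + 2 / (deg G y : ℝ) - 2) := by
    filter_upwards [Ioo_mem_nhdsLT_of_mem
      (show (1:ℝ) ∈ Set.Ioc (1/2 : ℝ) 1 from ⟨by norm_num, le_rfl⟩)] with α hα
    rw [kappaAlpha, W_value hconn hxy h3 h4 h5 hα.1 hα.2]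
    have hne : (1:ℝ) - α ≠ 0 := ne_of_gt (by linarith [hα.2])
    field_simp
    ring
  have htend : Filter.Tendsto (fun α => kappaAlpha G α x y / (1 - α)) (𝓝[<] (1:ℝ))
      (𝓝 (2 / (deg G x : ℝ) + 2 / (deg G y : ℝ) - 2)) :=
    Filter.Tendsto.congr' hev.symm tendsto_const_nhds
  exact htend.limUnder_eq


end RicciFlatPaper

end
end

section
/- Suppose that x is a leaf vertex (d_x = 1) of a connected, locally finite simple graph G with at least two vertices, and let y be the unique neighbor of x. Then κ(x,y) > 0. -/
open Filter Topology Classical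

noncomputable section

namespace RicciFlatPaper

variable {V : Type*}

-- leaf adjacency
lemma adj_leaf_iff {G : SimpleGraph V} {x y : V} (hxy : G.Adj x y) (hleaf : deg G x = 1) :
    ∀ v, G.Adj x v ↔ v = y := by
  obtain ⟨a, ha⟩ := Set.ncard_eq_one.mp hleaf
  have hy : y ∈ G.neighborSet x := hxy
  rw [ha] at hy
  subst hy
  intro v
  constructor
  · intro hv
    have : v ∈ G.neighborSet x := hv
    rw [ha] at this; simpa using this
  · rintro rfl; exact hxy

-- generic lower bound for coupling cost
lemma cost_ge {G : SimpleGraph V} (m₁ m₂ : V → ℝ) (t : Finset V)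
    (f : V → ℝ) (hf : ∀ u v, f u - f v ≤ (G.dist u v : ℝ))
    (A : V → V → ℝ) (hA : IsCoupling m₁ m₂ A)
    (h₁ : ∀ u, u ∉ t → m₁ u = 0) (h₂ : ∀ v, v ∉ t → m₂ v = 0) :
    ∑ u ∈ t, f u * (m₁ u - m₂ u) ≤ ∑ᶠ p : V × V, A p.1 p.2 * (G.dist p.1 p.2 : ℝ) := by
  obtain ⟨hpos, hfin, hrow, hcol⟩ := hA
  have hrowfin : ∀ u, (Function.support (A u)).Finite := by
    intro u
    have hsub : Function.support (A u) ⊆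
        (fun v => ((u, v) : V × V)) ⁻¹' (Function.support fun p : V × V => A p.1 p.2) :=
      fun v hv => hv
    exact (hfin.preimage (Set.injOn_of_injective (fun a b h => (Prod.mk.injEq _ _ _ _).mp h |>.2))).subset hsub
  have hcolfin : ∀ v, (Function.support (fun u => A u v)).Finite := by
    intro v
    have hsub : Function.support (fun u => A u v) ⊆
        (fun u => ((u, v) : V × V)) ⁻¹' (Function.support fun p : V × V => A p.1 p.2) :=
      fun u hu => hu
    exact (hfin.preimage (Set.injOn_of_injective (fun a b h => (Prod.mk.injEq _ _ _ _).mp h |>.1))).subset hsub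
  have hAz : ∀ u v, A u v ≠ 0 → u ∈ t ∧ v ∈ t := by
    intro u v h
    constructor
    · by_contra hu
      have hle : A u v ≤ m₁ u := by
        rw [← hrow u]; exact single_le_finsum v (hrowfin u) (fun j => hpos u j)
      rw [h₁ u hu] at hle
      exact h (le_antisymm hle (hpos u v))
    · by_contra hv
      have hle : A u v ≤ m₂ v := by
        rw [← hcol v]; exact single_le_finsum u (hcolfin v) (fun j => hpos j v)
      rw [h₂ v hv] at hle
      exact h (le_antisymm hle (hpos u v))
  have hsub : Function.support (fun p : V × V => A p.1 p.2 * (G.dist p.1 p.2 : ℝ)) ⊆ ↑(t ×ˢ t) := by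
    intro p hp
    have hne : A p.1 p.2 ≠ 0 := fun h => hp (by simp [Function.mem_support, h] at hp)
    obtain ⟨h1, h2⟩ := hAz _ _ hne
    simp [Finset.mem_product, h1, h2]
  rw [finsum_eq_sum_of_support_subset _ hsub, Finset.sum_product]
  have hrowt : ∀ u ∈ t, ∑ v ∈ t, A u v = m₁ u := by
    intro u _
    rw [← hrow u]
    exact (finsum_eq_sum_of_support_subset _ (fun v hv => (hAz u v hv).2)).symm
  have hcolt : ∀ v ∈ t, ∑ u ∈ t, A u v = m₂ v := by
    intro v _
    rw [← hcol v]
    exact (finsum_eq_sum_of_support_subset _ (fun u hu => (hAz u v hu).1)).symm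
  have key : ∑ u ∈ t, f u * (m₁ u - m₂ u) = ∑ u ∈ t, ∑ v ∈ t, A u v * (f u - f v) := by
    calc ∑ u ∈ t, f u * (m₁ u - m₂ u)
        = (∑ u ∈ t, f u * m₁ u) - ∑ u ∈ t, f u * m₂ u := by
          simp [mul_sub, Finset.sum_sub_distrib]
      _ = (∑ u ∈ t, ∑ v ∈ t, A u v * f u) - ∑ v ∈ t, ∑ u ∈ t, A u v * f v := by
          congr 1
          · refine Finset.sum_congr rfl fun u hu => ?_
            rw [← hrowt u hu, Finset.mul_sum]; exact Finset.sum_congr rfl fun v _ => mul_comm _ _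
          · refine Finset.sum_congr rfl fun v hv => ?_
            rw [← hcolt v hv, Finset.mul_sum]; exact Finset.sum_congr rfl fun u _ => mul_comm _ _
      _ = ∑ u ∈ t, ∑ v ∈ t, A u v * (f u - f v) := by
          rw [Finset.sum_comm (s := t) (t := t) (f := fun v u => A u v * f v),
            ← Finset.sum_sub_distrib]
          refine Finset.sum_congr rfl fun u _ => ?_
          rw [← Finset.sum_sub_distrib]
          refine Finset.sum_congr rfl fun v _ => by ring
  rw [key]
  refine Finset.sum_le_sum fun u _ => Finset.sum_le_sum fun v _ => ?_
  exact mul_le_mul_of_nonneg_left (hf u v) (hpos u v)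


lemma W_leaf {G : SimpleGraph V} [G.LocallyFinite] (hconn : G.Connected)
    {x y : V} (hxy : G.Adj x y) (hleaf : deg G x = 1) {α : ℝ}
    (hα1 : 1/2 ≤ α) (hα2 : α < 1) :
    W G (mass G α x) (mass G α y) = 1 - 2 * ((1 - α) / (deg G y : ℝ)) := by
  classical
  set n : Finset V := G.neighborFinset y with hn
  have hxn : x ∈ n := by simp [hn, hxy.symm]
  have hyn : y ∉ n := by simp [hn]
  have hxney : x ≠ y := hxy.ne
  have hcard : n.card = deg G y := by
    rw [deg, Set.ncard_eq_toFinset_card']; rfl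
  have hd0 : 0 < (deg G y : ℝ) := by
    have : 0 < n.card := Finset.card_pos.mpr ⟨x, hxn⟩
    rw [← hcard]; exact_mod_cast this
  set d : ℝ := (deg G y : ℝ) with hdd
  set c : ℝ := (1 - α) / d with hc
  have hc0 : 0 ≤ c := div_nonneg (by linarith) hd0.le
  have hdc : d * c = 1 - α := by
    rw [hc]; field_simp
  have hadj := adj_leaf_iff hxy hleaf
  set t : Finset V := insert y n with ht
  have hxt : x ∈ t := Finset.mem_insert_of_mem hxn
  have hyt : y ∈ t := Finset.mem_insert_self _ _
  set m₁ : V → ℝ := mass G α x with hm1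
  set m₂ : V → ℝ := mass G α y with hm2
  -- values of m₁
  have hm1x : m₁ x = α := by simp [hm1, mass]
  have hm1y : m₁ y = 1 - α := by
    simp only [hm1, mass, if_neg hxney.symm, if_pos hxy, hleaf]
    norm_num
  have hm1o : ∀ v, v ≠ x → v ≠ y → m₁ v = 0 := by
    intro v hvx hvy
    simp only [hm1, mass, if_neg hvx]
    rw [if_neg]
    intro hv
    exact hvy ((hadj v).mp hv)
  -- values of m₂
  have hm2y : m₂ y = α := by simp [hm2, mass]
  have hm2n : ∀ v ∈ n, m₂ v = c := by
    intro v hv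
    have hvy : v ≠ y := fun h => hyn (h ▸ hv)
    have : G.Adj y v := by simpa [hn] using hv
    simp [hm2, mass, hvy, this, hc, hdd]
  have hm2o : ∀ v, v ∉ t → m₂ v = 0 := by
    intro v hv
    have hvy : v ≠ y := fun h => hv (h ▸ hyt)
    have hvn : v ∉ n := fun h => hv (Finset.mem_insert_of_mem h)
    simp only [hm2, mass, if_neg hvy]
    rw [if_neg]
    intro h
    exact hvn (by simp [hn, h])
  have hm1o' : ∀ u, u ∉ t → m₁ u = 0 := by
    intro u hu
    exact hm1o u (fun h => hu (h ▸ hxt)) (fun h => hu (h ▸ hyt))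
  -- distances
  have hdxy : G.dist x y = 1 := SimpleGraph.dist_eq_one_iff_adj.mpr hxy
  have hdxz : ∀ z ∈ n, z ≠ x → G.dist x z = 2 := by
    intro z hz hzx
    have hyz : G.Adj y z := by simpa [hn] using hz
    have hle : G.dist x z ≤ 2 := by
      have := G.dist_le (hxy.toWalk.append hyz.toWalk)
      simpa using this
    have h0 : G.dist x z ≠ 0 := fun h => hzx ((hconn.dist_eq_zero_iff).mp h).symm
    have h1 : G.dist x z ≠ 1 := fun h =>
      hyz.ne' ((hadj z).mp (SimpleGraph.dist_eq_one_iff_adj.mp h))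
    omega
  -- Lipschitz-type function
  set f : V → ℝ := fun v => 2 - (G.dist x v : ℝ) with hfdef
  have hf : ∀ u v, f u - f v ≤ (G.dist u v : ℝ) := by
    intro u v
    have := hconn.dist_triangle (u := x) (v := u) (w := v)
    have h2 : (G.dist x v : ℝ) ≤ (G.dist x u : ℝ) + (G.dist u v : ℝ) := by exact_mod_cast this
    simp only [hfdef]
    linarith
  have hfx : f x = 2 := by simp [hfdef]
  have hfy : f y = 1 := by norm_num [hfdef, hdxy]
  have hfz : ∀ z ∈ n, z ≠ x → f z = 0 := by
    intro z hz hzx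
    simp [hfdef, hdxz z hz hzx]
  -- lower bound value
  have hL : ∑ u ∈ t, f u * (m₁ u - m₂ u) = 1 - 2 * c := by
    rw [ht, Finset.sum_insert hyn, ← Finset.insert_erase hxn,
      Finset.sum_insert (Finset.notMem_erase x n)]
    have hz : ∑ u ∈ n.erase x, f u * (m₁ u - m₂ u) = 0 := by
      refine Finset.sum_eq_zero fun u hu => ?_
      rw [hfz u (Finset.mem_of_mem_erase hu) (Finset.ne_of_mem_erase hu)]
      ring
    have hm2x : m₂ x = c := hm2n x hxn
    rw [hz, hfx, hfy, hm1x, hm1y, hm2x, hm2y]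
    ring
  -- the explicit optimal coupling
  set A₀ : V → V → ℝ := fun u v =>
    if u = x then (if v = x then c else if v = y then 2*α - 1 else if v ∈ n then c else 0)
    else if u = y ∧ v = y then 1 - α else 0 with hA₀
  have hA0pos : ∀ u v, 0 ≤ A₀ u v := by
    intro u v
    simp only [hA₀]
    split_ifs <;> linarith
  have hA0z : ∀ u v, A₀ u v ≠ 0 → (u = x ∨ u = y) ∧ v ∈ t := by
    intro u v h
    simp only [hA₀] at h
    split_ifs at h with h1 h2 h3 h4 h5
    · exact ⟨Or.inl h1, h2 ▸ hxt⟩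
    · exact ⟨Or.inl h1, h3 ▸ hyt⟩
    · exact ⟨Or.inl h1, Finset.mem_insert_of_mem h4⟩
    · exact absurd rfl h
    · exact ⟨Or.inr h5.1, h5.2 ▸ hyt⟩
    · exact absurd rfl h
  have hA0sup : Function.support (fun p : V × V => A₀ p.1 p.2) ⊆ ↑(t ×ˢ t) := by
    intro p hp
    obtain ⟨h1, h2⟩ := hA0z p.1 p.2 hp
    have : p.1 ∈ t := by rcases h1 with h | h <;> [exact h ▸ hxt; exact h ▸ hyt]
    simp [Finset.mem_product, this, h2]
  -- row sums
  have hrowx : ∑ v ∈ t, A₀ x v = α := by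
    rw [ht, Finset.sum_insert hyn, ← Finset.insert_erase hxn,
      Finset.sum_insert (Finset.notMem_erase x n)]
    have h1 : A₀ x y = 2*α - 1 := by simp [hA₀, hxney.symm]
    have h2 : A₀ x x = c := by simp [hA₀]
    have h3 : ∑ v ∈ n.erase x, A₀ x v = ((n.card : ℝ) - 1) * c := by
      rw [Finset.sum_congr rfl (fun v hv => ?_), Finset.sum_const,
        Finset.card_erase_of_mem hxn, nsmul_eq_mul]
      · congr 1
        have : 1 ≤ n.card := Finset.card_pos.mpr ⟨x, hxn⟩
        push_cast [Nat.cast_sub this]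
        ring
      · have hvx : v ≠ x := Finset.ne_of_mem_erase hv
        have hvn : v ∈ n := Finset.mem_of_mem_erase hv
        have hvy : v ≠ y := fun h => hyn (h ▸ hvn)
        simp [hA₀, hvx, hvy, hvn]
    rw [h1, h2, h3, hcard]
    have hdeq : (deg G y : ℝ) = d := rfl
    rw [hdeq]
    linear_combination hdc
  have hrowy : ∀ v, A₀ y v = if v = y then 1 - α else 0 := by
    intro v
    simp only [hA₀, if_neg hxney.symm]
    by_cases h : v = y <;> simp [h]
  have hrow : ∀ u, ∑ᶠ v, A₀ u v = m₁ u := by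
    intro u
    by_cases hux : u = x
    · subst hux
      rw [finsum_eq_sum_of_support_subset _ (s := t) (fun v hv => (hA0z u v hv).2), hrowx, hm1x]
    · by_cases huy : u = y
      · subst huy
        have : ∑ᶠ v, A₀ u v = ∑ v ∈ ({u} : Finset V), A₀ u v := by
          refine finsum_eq_sum_of_support_subset _ (fun v hv => ?_)
          rw [Function.mem_support, hrowy] at hv
          simp only [Finset.coe_singleton, Set.mem_singleton_iff]
          by_contra h
          rw [if_neg h] at hv
          exact hv rfl
        rw [this, Finset.sum_singleton, hrowy, if_pos rfl, hm1y]
      · have : (fun v => A₀ u v) = fun _ => 0 := by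
          funext v
          simp [hA₀, hux, huy]
        rw [this, finsum_zero, hm1o u hux huy]
  -- column sums
  have hcolfs : ∀ v, ∑ᶠ u, A₀ u v = A₀ x v + A₀ y v := by
    intro v
    have : ∑ᶠ u, A₀ u v = ∑ u ∈ ({x, y} : Finset V), A₀ u v := by
      refine finsum_eq_sum_of_support_subset _ (fun u hu => ?_)
      rw [Function.mem_support] at hu
      rcases (hA0z u v hu).1 with h | h <;> simp [h]
    rw [this, Finset.sum_insert (by simp [hxney]), Finset.sum_singleton]
  have hcol : ∀ v, ∑ᶠ u, A₀ u v = m₂ v := by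
    intro v
    rw [hcolfs]
    by_cases hvy : v = y
    · rw [hrowy, if_pos hvy, hvy, hm2y]
      have hAxy : A₀ x y = 2*α - 1 := by simp [hA₀, hxney.symm]
      rw [hAxy]; ring
    · rw [hrowy, if_neg hvy, add_zero]
      by_cases hvn : v ∈ n
      · rw [hm2n v hvn]
        by_cases hvx : v = x
        · simp [hA₀, hvx]
        · simp [hA₀, hvx, hvy, hvn]
      · have hvt : v ∉ t := by
          simp only [ht, Finset.mem_insert]
          push_neg
          exact ⟨hvy, hvn⟩
        rw [hm2o v hvt]
        have hvx : v ≠ x := fun h => hvn (h ▸ hxn)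
        simp [hA₀, hvx, hvy, hvn]
  have hcoupling : IsCoupling m₁ m₂ A₀ :=
    ⟨hA0pos, Set.Finite.subset (t ×ˢ t).finite_toSet hA0sup, hrow, hcol⟩
  -- the cost of A₀
  have hcost : ∑ᶠ p : V × V, A₀ p.1 p.2 * (G.dist p.1 p.2 : ℝ) = 1 - 2 * c := by
    have hsub : Function.support (fun p : V × V => A₀ p.1 p.2 * (G.dist p.1 p.2 : ℝ)) ⊆ ↑(t ×ˢ t) := by
      intro p hp
      have : A₀ p.1 p.2 ≠ 0 := fun h => hp (by simp [Function.mem_support, h] at hp)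
      exact hA0sup this
    rw [finsum_eq_sum_of_support_subset _ hsub, Finset.sum_product]
    have hrowcost : ∀ u ∈ t, ∑ v ∈ t, A₀ u v * (G.dist u v : ℝ) = if u = x then 1 - 2*c else 0 := by
      intro u _
      by_cases hux : u = x
      · rw [if_pos hux, hux, ht, Finset.sum_insert hyn, ← Finset.add_sum_erase _ _ hxn]
        have h1 : A₀ x y * (G.dist x y : ℝ) = 2*α - 1 := by
          simp [hA₀, hxney.symm, hdxy]
        have h2 : A₀ x x * (G.dist x x : ℝ) = 0 := by simp
        have h3 : ∑ v ∈ n.erase x, A₀ x v * (G.dist x v : ℝ) = ((n.card : ℝ) - 1) * (c * 2) := by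
          have hterm : ∀ v ∈ n.erase x, A₀ x v * (G.dist x v : ℝ) = c * 2 := by
            intro v hv
            have hvx : v ≠ x := Finset.ne_of_mem_erase hv
            have hvn : v ∈ n := Finset.mem_of_mem_erase hv
            have hvy : v ≠ y := fun h => hyn (h ▸ hvn)
            rw [hdxz v hvn hvx]
            have hAv : A₀ x v = c := by simp [hA₀, hvx, hvy, hvn]
            rw [hAv]; norm_num
          rw [Finset.sum_congr rfl hterm, Finset.sum_const,
            Finset.card_erase_of_mem hxn, nsmul_eq_mul]
          have hone : 1 ≤ n.card := Finset.card_pos.mpr ⟨x, hxn⟩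
          push_cast [Nat.cast_sub hone]
          ring
        rw [h1, h2, h3, hcard]
        have hdeq : (deg G y : ℝ) = d := rfl
        rw [hdeq]
        linear_combination 2 * hdc
      · rw [if_neg hux]
        refine Finset.sum_eq_zero fun v _ => ?_
        by_cases huy : u = y
        · rw [huy, hrowy]
          by_cases h : v = y
          · rw [if_pos h, h]; simp
          · rw [if_neg h]; ring
        · have hz : A₀ u v = 0 := by simp [hA₀, hux, huy]
          rw [hz]; ring
    rw [Finset.sum_congr rfl hrowcost]
    simp [Finset.sum_ite_eq', hxt]
  -- conclude
  have hmem : (1 - 2 * c) ∈ {cc | ∃ A : V → V → ℝ, IsCoupling m₁ m₂ A ∧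
      cc = ∑ᶠ p : V × V, A p.1 p.2 * (G.dist p.1 p.2 : ℝ)} :=
    ⟨A₀, hcoupling, hcost.symm⟩
  have hlb : ∀ cc ∈ {cc | ∃ A : V → V → ℝ, IsCoupling m₁ m₂ A ∧
      cc = ∑ᶠ p : V × V, A p.1 p.2 * (G.dist p.1 p.2 : ℝ)}, 1 - 2 * c ≤ cc := by
    rintro cc ⟨A, hA, rfl⟩
    rw [← hL]
    exact cost_ge m₁ m₂ t f hf A hA hm1o' hm2o
  have : W G m₁ m₂ = 1 - 2 * c :=
    le_antisymm (csInf_le ⟨1 - 2 * c, hlb⟩ hmem) (le_csInf ⟨_, hmem⟩ hlb)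
  rw [this, hc, hdd]


/-- If `x` is a leaf vertex (of degree one) and `y` is its
unique neighbor, then `κ(x,y) > 0`. -/
theorem ricci_pos_of_leaf
    {V : Type*} (G : SimpleGraph V) [G.LocallyFinite] (hconn : G.Connected)
    {x y : V} (hxy : G.Adj x y) (hleaf : deg G x = 1) :
    0 < ricci G x y := by
  have hd0 : 0 < (deg G y : ℝ) := by
    have hfin : (G.neighborSet y).Finite := (G.neighborSet y).toFinite
    have : 0 < deg G y := (Set.ncard_pos hfin).mpr ⟨x, hxy.symm⟩
    exact_mod_cast this
  have hlim : Tendsto (fun α => kappaAlpha G α x y / (1 - α)) (𝓝[<] (1 : ℝ))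
      (𝓝 (2 / (deg G y : ℝ))) := by
    refine Filter.Tendsto.congr' ?_ tendsto_const_nhds
    filter_upwards [Ioo_mem_nhdsLT (show (1/2 : ℝ) < 1 by norm_num)] with α hα
    have h1 : (1 : ℝ) - α ≠ 0 := sub_ne_zero.mpr (ne_of_lt hα.2).symm
    rw [kappaAlpha, W_leaf hconn hxy hleaf hα.1.le hα.2]
    field_simp
    ring
  rw [ricci, hlim.limUnder_eq]
  positivity

end RicciFlatPaper

end
end

section
/- Suppose that an edge xy in a connected, locally finite simple graph G is not contained in any cycle of length 3 or 4, that d_x = d_y = 2, and that xy is contained in some 5-cycle. Then κ(x,y) > 0. -/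
open Filter Topology Classical

noncomputable section

namespace RicciFlatPaper

variable {V : Type*}

-- 2 ≤ dist
lemma two_le_dist_s6 {G : SimpleGraph V} (hconn : G.Connected) {u v : V}
    (hne : u ≠ v) (hadj : ¬ G.Adj u v) : 2 ≤ G.dist u v := by
  rcases Nat.lt_or_ge (G.dist u v) 2 with h | h
  · interval_cases h' : G.dist u v
    · exact absurd (hconn.dist_eq_zero_iff.mp h') hne
    · exact absurd (SimpleGraph.dist_eq_one_iff_adj.mp h') hadj
  · exact h


lemma cycle3 {G : SimpleGraph V} {x y z : V} (h1 : G.Adj x y) (h2 : G.Adj y z)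
    (h3 : G.Adj z x) :
    ∃ (v : V) (c : G.Walk v v), c.IsCycle ∧ c.length = 3 ∧ s(x, y) ∈ c.edges := by
  refine ⟨x, SimpleGraph.Walk.cons h1 (SimpleGraph.Walk.cons h2 (SimpleGraph.Walk.cons h3 SimpleGraph.Walk.nil)), ?_, by simp, by simp⟩
  rw [SimpleGraph.Walk.isCycle_def, SimpleGraph.Walk.isTrail_def]
  refine ⟨?_, by simp, ?_⟩
  · simp [Sym2.eq, Sym2.rel_iff', h1.ne, h2.ne, h3.ne, h1.ne', h2.ne', h3.ne']
  · simp [h2.ne, h3.ne, h1.ne']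

lemma cycle4 {G : SimpleGraph V} {x y z w : V} (h1 : G.Adj x y) (h2 : G.Adj y z)
    (h3 : G.Adj z w) (h4 : G.Adj w x) (hxz : x ≠ z) (hyw : y ≠ w) :
    ∃ (v : V) (c : G.Walk v v), c.IsCycle ∧ c.length = 4 ∧ s(x, y) ∈ c.edges := by
  refine ⟨x, SimpleGraph.Walk.cons h1 (SimpleGraph.Walk.cons h2 (SimpleGraph.Walk.cons h3 (SimpleGraph.Walk.cons h4 SimpleGraph.Walk.nil))), ?_, by simp, by simp⟩
  rw [SimpleGraph.Walk.isCycle_def, SimpleGraph.Walk.isTrail_def]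
  refine ⟨?_, by simp, ?_⟩
  · simp [Sym2.eq, Sym2.rel_iff', h1.ne, h2.ne, h3.ne, h4.ne, h1.ne', h2.ne', h3.ne', h4.ne', hxz, hyw, hxz.symm, hyw.symm]
  · simp [h2.ne, h3.ne, h4.ne, h1.ne', hxz, hyw, hxz.symm, hyw.symm]

lemma c5_extract {G : SimpleGraph V} {x y a b : V}
    (hnx : ∀ z, G.Adj x z → z = y ∨ z = a) (hny : ∀ z, G.Adj y z → z = x ∨ z = b)
    (h5 : ∃ (v : V) (c : G.Walk v v), c.IsCycle ∧ c.length = 5 ∧ s(x, y) ∈ c.edges) :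
    ∃ c, G.Adj a c ∧ G.Adj c b := by
  obtain ⟨v, w, hc, hlen, he⟩ := h5
  have hx : x ∈ w.support := w.fst_mem_support_of_mem_edges he
  set w' := w.rotate x hx with hw'
  have hc' : w'.IsCycle := hc.rotate hx
  have hlen' : w'.length = 5 := by
    rw [← SimpleGraph.Walk.length_edges, (w.rotate_edges x hx).perm.length_eq,
      SimpleGraph.Walk.length_edges, hlen]
  clear_value w'
  clear hw' he hx hc hlen w
  cases w' with
  | nil => simp at hlen'
  | cons h1 p1 =>
  cases p1 with
  | nil => simp at hlen'
  | cons h2 p2 =>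
  cases p2 with
  | nil => simp at hlen'
  | cons h3 p3 =>
  cases p3 with
  | nil => simp at hlen'
  | cons h4 p4 =>
  cases p4 with
  | nil => simp at hlen'
  | cons h5 p5 =>
  cases p5 with
  | cons h6 p6 => simp at hlen'
  | nil =>
    rename_i v1 v2 v3 v4
    have hnd := hc'.support_nodup
    simp only [SimpleGraph.Walk.support_cons, SimpleGraph.Walk.support_nil,
      List.tail_cons, List.nodup_cons, List.mem_cons, List.mem_singleton,
      List.not_mem_nil, or_false, List.nodup_nil, and_true] at hnd
    push_neg at hnd
    -- hnd gives distinctness among v1 v2 v3 v4 x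
    have h14 : v1 ≠ v4 := hnd.1.2.2.1
    have h1x : v1 ≠ x := hnd.1.2.2.2
    have h2x : v2 ≠ x := hnd.2.1.2.2
    have h3x : v3 ≠ x := hnd.2.2.1.2
    rcases hnx v1 h1 with rfl | rfl
    · -- v1 = y
      rcases hnx v4 h5.symm with h4y | rfl
      · exact absurd h4y.symm h14
      · -- v4 = a
        rcases hny v2 h2 with h2x' | rfl
        · exact absurd h2x' h2x
        · exact ⟨v3, h4.symm, h3.symm⟩
    · -- v1 = a
      rcases hnx v4 h5.symm with rfl | h4a
      · rcases hny v3 h4.symm with h3x' | rfl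
        · exact absurd h3x' h3x
        · exact ⟨v2, h2, h3⟩
      · exact absurd h4a.symm h14

lemma finsum_ite (c : V) (t : ℝ) : ∑ᶠ v, (if v = c then t else 0) = t := by
  rw [finsum_eq_single _ c (fun b hb => by simp [hb])]; simp

lemma support_ite (c : V) (t : ℝ) :
    Function.support (fun v => if v = c then t else 0) ⊆ {c} := by
  intro v hv
  by_contra h
  simp only [Set.mem_singleton_iff] at h
  simp [Function.mem_support, h] at hv

lemma finsum_ite2 (c d : V) (s t : ℝ) :
    ∑ᶠ v, ((if v = c then s else 0) + (if v = d then t else 0)) = s + t := by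
  rw [finsum_add_distrib ((Set.finite_singleton c).subset (support_ite c s))
    ((Set.finite_singleton d).subset (support_ite d t)), finsum_ite, finsum_ite]

lemma single_le_finsum' {f : V → ℝ} (hf : (Function.support f).Finite)
    (h0 : ∀ i, 0 ≤ f i) (i : V) : f i ≤ ∑ᶠ j, f j := by
  classical
  rw [finsum_eq_finset_sum_of_support_subset f (s := insert i hf.toFinset) (by simp)]
  exact Finset.single_le_sum (fun j _ => h0 j) (Finset.mem_insert_self i _)

lemma finsum_pair4 {p1 p2 p3 p4 : V × V} (h12 : p1 ≠ p2) (h13 : p1 ≠ p3)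
    (h14 : p1 ≠ p4) (h23 : p2 ≠ p3) (h24 : p2 ≠ p4) (h34 : p3 ≠ p4)
    (g : V × V → ℝ) (hg : ∀ p, p ≠ p1 → p ≠ p2 → p ≠ p3 → p ≠ p4 → g p = 0) :
    ∑ᶠ p, g p = g p1 + g p2 + g p3 + g p4 := by
  classical
  rw [finsum_eq_finset_sum_of_support_subset g (s := {p1, p2, p3, p4}) ?_]
  · rw [Finset.sum_insert (by simp [h12, h13, h14]),
      Finset.sum_insert (by simp [h23, h24]),
      Finset.sum_insert (by simp [h34]), Finset.sum_singleton]
    ring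
  · intro p hp
    by_contra h
    simp only [Finset.coe_insert, Set.mem_insert_iff, Finset.coe_singleton,
      Set.mem_singleton_iff, not_or] at h
    exact hp (hg p h.1 h.2.1 h.2.2.1 h.2.2.2)

lemma W_eq_s6 {G : SimpleGraph V} (hconn : G.Connected) {x y a b : V}
    (hxy : G.Adj x y) (hxa : G.Adj x a) (hyb : G.Adj y b)
    (hdx : deg G x = 2) (hdy : deg G y = 2)
    (hnx : ∀ z, G.Adj x z → z = y ∨ z = a) (hny : ∀ z, G.Adj y z → z = x ∨ z = b)
    (hay : a ≠ y) (hbx : b ≠ x) (hab : a ≠ b)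
    (dab : G.dist a b = 2) (day : 2 ≤ G.dist a y)
    {α : ℝ} (hα : α ∈ Set.Ioo (1/2 : ℝ) 1) :
    W G (mass G α x) (mass G α y) = (1 + α) / 2 := by
  classical
  have hxyne : x ≠ y := hxy.ne
  have hxane : x ≠ a := hxa.ne
  have haxne : a ≠ x := hxa.ne'
  have hybne : y ≠ b := hyb.ne
  have hbyne : b ≠ y := hyb.ne'
  have hxbne : x ≠ b := hbx.symm
  have hyane : y ≠ a := hay.symm
  have hβ0 : (0:ℝ) ≤ (1 - α) / 2 := by linarith [hα.2]
  have hαβ : (0:ℝ) ≤ α - (1 - α) / 2 := by linarith [hα.1]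
  have hdx2 : ((deg G x : ℕ) : ℝ) = 2 := by rw [hdx]; norm_num
  have hdy2 : ((deg G y : ℕ) : ℝ) = 2 := by rw [hdy]; norm_num
  -- mass values
  have mxx : mass G α x x = α := by simp [mass]
  have mxy : mass G α x y = (1 - α) / 2 := by simp [mass, hxyne.symm, hxy, hdx2]
  have mxa : mass G α x a = (1 - α) / 2 := by simp [mass, haxne, hxa, hdx2]
  have mx0 : ∀ u, u ≠ x → u ≠ y → u ≠ a → mass G α x u = 0 := by
    intro u h1 h2 h3
    have : ¬ G.Adj x u := fun h => by rcases hnx u h with rfl | rfl <;> simp_all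
    simp [mass, h1, this]
  have myy : mass G α y y = α := by simp [mass]
  have myx : mass G α y x = (1 - α) / 2 := by simp [mass, hxyne, hyb, hdy2, hxy.symm]
  have myb : mass G α y b = (1 - α) / 2 := by simp [mass, hbyne, hyb, hdy2]
  have my0 : ∀ v, v ≠ x → v ≠ y → v ≠ b → mass G α y v = 0 := by
    intro v h1 h2 h3
    have : ¬ G.Adj y v := fun h => by rcases hny v h with rfl | rfl <;> simp_all
    simp [mass, h2, this]
  -- distances
  have dxy : G.dist x y = 1 := SimpleGraph.dist_eq_one_iff_adj.mpr hxy
  have dax : G.dist a x = 1 := SimpleGraph.dist_eq_one_iff_adj.mpr hxa.symm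
  have dxb : 1 ≤ G.dist x b := hconn.pos_dist_of_ne hxbne
  -- the explicit coupling
  set β : ℝ := (1 - α) / 2 with hβdef
  set A₀ : V → V → ℝ := fun u v =>
    (if u = x ∧ v = x then β else 0) + (if u = x ∧ v = y then α - β else 0) +
    (if u = y ∧ v = y then β else 0) + (if u = a ∧ v = b then β else 0) with hA₀
  have hA₀zero : ∀ u v, ¬(u = x ∧ v = x) → ¬(u = x ∧ v = y) → ¬(u = y ∧ v = y) →
      ¬(u = a ∧ v = b) → A₀ u v = 0 := by
    intro u v h1 h2 h3 h4; simp [hA₀, h1, h2, h3, h4]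
  have hcoup : IsCoupling (mass G α x) (mass G α y) A₀ := by
    refine ⟨?_, ?_, ?_, ?_⟩
    · intro u v
      simp only [hA₀]
      split_ifs <;> linarith
    · apply Set.Finite.subset (Set.toFinite {((x,x) : V × V), (x,y), (y,y), (a,b)})
      intro p hp
      by_contra h
      simp only [Set.mem_insert_iff, Set.mem_singleton_iff, Prod.ext_iff, not_or] at h
      exact hp (hA₀zero p.1 p.2 h.1 h.2.1 h.2.2.1 h.2.2.2)
    · intro u
      by_cases hux : u = x
      · rw [hux,
          finsum_congr (g := fun v => (if v = x then β else 0) + (if v = y then α - β else 0))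
          (fun v => by simp [hA₀, hxyne, hxane]), finsum_ite2, mxx]
        ring
      · by_cases huy : u = y
        · rw [huy, finsum_congr (g := fun v => (if v = y then β else 0))
            (fun v => by simp [hA₀, hxyne.symm, hyane]), finsum_ite, mxy]
        · by_cases hua : u = a
          · rw [hua, finsum_congr (g := fun v => (if v = b then β else 0))
              (fun v => by simp [hA₀, haxne, hay]), finsum_ite, mxa]
          · rw [finsum_congr (g := fun _ => (0:ℝ))
              (fun v => by simp [hA₀, hux, huy, hua]), finsum_zero, mx0 u hux huy hua]
    · intro v
      by_cases hvx : v = x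
      · rw [hvx, finsum_congr (g := fun u => (if u = x then β else 0))
          (fun u => by simp [hA₀, hxyne, hxbne]), finsum_ite, myx]
      · by_cases hvy : v = y
        · rw [hvy, finsum_congr (g := fun u => (if u = x then α - β else 0) + (if u = y then β else 0))
            (fun u => by simp [hA₀, hxyne.symm, hybne]), finsum_ite2, myy]
          ring
        · by_cases hvb : v = b
          · rw [hvb, finsum_congr (g := fun u => (if u = a then β else 0))
              (fun u => by simp [hA₀, hbx, hbyne]), finsum_ite, myb]
          · rw [finsum_congr (g := fun _ => (0:ℝ))
              (fun u => by simp [hA₀, hvx, hvy, hvb]), finsum_zero, my0 v hvx hvy hvb]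
  -- cost of the explicit coupling
  have hcost : ∑ᶠ p : V × V, A₀ p.1 p.2 * (G.dist p.1 p.2 : ℝ) = (1 + α) / 2 := by
    rw [finsum_pair4 (p1 := ((x,x) : V × V)) (p2 := (x,y)) (p3 := (y,y)) (p4 := (a,b))
      (by simp [Prod.ext_iff, hxyne]) (by simp [Prod.ext_iff, hxyne])
      (by simp [Prod.ext_iff, hxane]) (by simp [Prod.ext_iff, hxyne])
      (by simp [Prod.ext_iff, hxane]) (by simp [Prod.ext_iff, hyane])
      _ (fun p h1 h2 h3 h4 => by
        rw [hA₀zero p.1 p.2 (by simpa [Prod.ext_iff] using h1) (by simpa [Prod.ext_iff] using h2)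
          (by simpa [Prod.ext_iff] using h3) (by simpa [Prod.ext_iff] using h4), zero_mul])]
    have e1 : A₀ x x = β := by simp [hA₀, hxyne, hxane, hxbne]
    have e2 : A₀ x y = α - β := by simp [hA₀, hxyne, hxyne.symm, hybne, hxane]
    have e3 : A₀ y y = β := by simp [hA₀, hxyne.symm, hyane, hybne]
    have e4 : A₀ a b = β := by simp [hA₀, haxne, hay, hbx, hbyne]
    simp only [e1, e2, e3, e4, SimpleGraph.dist_self, dxy, dab]
    push_cast
    ring
  -- least element
  apply IsLeast.csInf_eq
  constructor
  · exact ⟨A₀, hcoup, hcost.symm⟩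
  · rintro cc ⟨A, ⟨hA0, hAfin, hrow, hcol⟩, rfl⟩
    have hfin_row : ∀ u, (Function.support (fun v => A u v)).Finite := fun u =>
      (hAfin.image Prod.snd).subset (fun v hv => ⟨(u, v), hv, rfl⟩)
    have hfin_col : ∀ v, (Function.support (fun u => A u v)).Finite := fun v =>
      (hAfin.image Prod.fst).subset (fun u hu => ⟨(u, v), hu, rfl⟩)
    have supp1 : ∀ u v, A u v ≠ 0 → u = x ∨ u = y ∨ u = a := by
      intro u v h
      by_contra hc
      push_neg at hc
      have h1 : A u v ≤ mass G α x u := by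
        rw [← hrow u]; exact single_le_finsum' (hfin_row u) (hA0 u) v
      rw [mx0 u hc.1 hc.2.1 hc.2.2] at h1
      exact h (le_antisymm h1 (hA0 u v))
    have supp2 : ∀ u v, A u v ≠ 0 → v = x ∨ v = y ∨ v = b := by
      intro u v h
      by_contra hc
      push_neg at hc
      have h1 : A u v ≤ mass G α y v := by
        rw [← hcol v]; exact single_le_finsum' (hfin_col v) (fun u' => hA0 u' v) u
      rw [my0 v hc.1 hc.2.1 hc.2.2] at h1
      exact h (le_antisymm h1 (hA0 u v))
    set f : V → ℝ := fun v => if v = x then 1 else if v = a then 2 else 0 with hf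
    have fx : f x = 1 := by simp [hf]
    have fy : f y = 0 := by simp [hf, hxyne.symm, hyane]
    have fa : f a = 2 := by simp [hf, haxne]
    have fb : f b = 0 := by simp [hf, hbx, hab.symm]
    set Px : Finset V := {x, y, a} with hPx
    set Py : Finset V := {x, y, b} with hPy
    have hmemPx : ∀ u v, A u v ≠ 0 → u ∈ Px := by
      intro u v h; rcases supp1 u v h with h' | h' | h' <;> rw [h'] <;> simp [hPx]
    have hmemPy : ∀ u v, A u v ≠ 0 → v ∈ Py := by
      intro u v h; rcases supp2 u v h with h' | h' | h' <;> rw [h'] <;> simp [hPy]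
    have hrowP : ∀ u, ∑ v ∈ Py, A u v = mass G α x u := by
      intro u
      rw [← hrow u, finsum_eq_finset_sum_of_support_subset]
      intro v hv
      exact hmemPy u v hv
    have hcolP : ∀ v, ∑ u ∈ Px, A u v = mass G α y v := by
      intro v
      rw [← hcol v, finsum_eq_finset_sum_of_support_subset]
      intro u hu
      exact hmemPx u v hu
    have hcosteq : ∑ᶠ p : V × V, A p.1 p.2 * (G.dist p.1 p.2 : ℝ)
        = ∑ p ∈ Px ×ˢ Py, A p.1 p.2 * (G.dist p.1 p.2 : ℝ) := by
      apply finsum_eq_finset_sum_of_support_subset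
      intro p hp
      have hA : A p.1 p.2 ≠ 0 := by
        intro h0; simp [h0] at hp
      exact Finset.mem_product.mpr ⟨hmemPx _ _ hA, hmemPy _ _ hA⟩
    rw [hcosteq]
    have key : ∑ p ∈ Px ×ˢ Py, A p.1 p.2 * (f p.1 - f p.2)
        ≤ ∑ p ∈ Px ×ˢ Py, A p.1 p.2 * (G.dist p.1 p.2 : ℝ) := by
      apply Finset.sum_le_sum
      rintro ⟨u, v⟩ hp
      rw [Finset.mem_product] at hp
      apply mul_le_mul_of_nonneg_left _ (hA0 u v)
      have hu : u = x ∨ u = y ∨ u = a := by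
        have := hp.1; simp [hPx] at this; tauto
      have hv : v = x ∨ v = y ∨ v = b := by
        have := hp.2; simp [hPy] at this; tauto
      have hd0 : (0:ℝ) ≤ (G.dist u v : ℝ) := Nat.cast_nonneg _
      have cxb : (1:ℝ) ≤ (G.dist x b : ℝ) := by exact_mod_cast dxb
      have cay : (2:ℝ) ≤ (G.dist a y : ℝ) := by exact_mod_cast day
      have cyx : (0:ℝ) ≤ (G.dist y x : ℝ) := Nat.cast_nonneg _
      have cyb : (0:ℝ) ≤ (G.dist y b : ℝ) := Nat.cast_nonneg _
      rcases hu with h' | h' | h' <;> rcases hv with h'' | h'' | h'' <;> rw [h', h''] <;>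
        simp only [fx, fy, fa, fb, SimpleGraph.dist_self, dxy, dax, dab] <;>
        push_cast <;> linarith [cxb, cay, cyx, cyb]
    refine le_trans (le_of_eq ?_) key
    -- compute the dual sum
    rw [Finset.sum_product]
    have expand : ∀ u, ∑ v ∈ Py, A u v * (f u - f v)
        = f u * (∑ v ∈ Py, A u v) - ∑ v ∈ Py, f v * A u v := by
      intro u
      rw [Finset.mul_sum, ← Finset.sum_sub_distrib]
      congr 1
      ext v
      ring
    rw [Finset.sum_congr rfl (fun u _ => expand u)]
    rw [Finset.sum_sub_distrib]
    have S1 : ∑ u ∈ Px, f u * (∑ v ∈ Py, A u v) = α + 2 * β := by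
      rw [Finset.sum_congr rfl (fun u _ => by rw [hrowP u])]
      rw [hPx, Finset.sum_insert (by simp [hxyne, hxane]),
        Finset.sum_insert (by simp [hyane]), Finset.sum_singleton]
      rw [fx, fy, fa, mxx, mxy, mxa]
      ring
    have S2 : ∑ u ∈ Px, ∑ v ∈ Py, f v * A u v = β := by
      rw [Finset.sum_comm]
      rw [Finset.sum_congr rfl (fun v _ => by rw [← Finset.mul_sum, hcolP v])]
      rw [hPy, Finset.sum_insert (by simp [hxyne, hxbne]),
        Finset.sum_insert (by simp [hybne]), Finset.sum_singleton]
      rw [fx, fy, fb, myx, myy, myb]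
      ring
    rw [S1, S2]
    ring



/-- If the edge `xy` is not contained in any cycle of length
3 or 4, `d_x = d_y = 2`, and `xy` lies on some 5-cycle, then `κ(x,y) > 0`. -/
theorem ricci_pos_of_deg_two_two_on_C5
    {V : Type*} (G : SimpleGraph V) [G.LocallyFinite] (hconn : G.Connected)
    {x y : V} (hxy : G.Adj x y)
    (h3 : ¬ EdgeInCycleOfLength G x y 3)
    (h4 : ¬ EdgeInCycleOfLength G x y 4)
    (hdx : deg G x = 2) (hdy : deg G y = 2)
    (h5 : EdgeInCycleOfLength G x y 5) :
    0 < ricci G x y := by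
  classical
  -- extract the second neighbor of x
  obtain ⟨a, hxa, hay, hnx⟩ :
      ∃ a, G.Adj x a ∧ a ≠ y ∧ (∀ z, G.Adj x z → z = y ∨ z = a) := by
    obtain ⟨u, v, huv, hset⟩ := Set.ncard_eq_two.mp hdx
    have hy : y ∈ G.neighborSet x := hxy
    rw [hset] at hy
    simp only [Set.mem_insert_iff, Set.mem_singleton_iff] at hy
    rcases hy with rfl | rfl
    · refine ⟨v, ?_, huv.symm, ?_⟩
      · have : v ∈ G.neighborSet x := by rw [hset]; simp
        exact this
      · intro z hz
        have : z ∈ G.neighborSet x := hz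
        rw [hset] at this
        simpa using this
    · refine ⟨u, ?_, huv, ?_⟩
      · have : u ∈ G.neighborSet x := by rw [hset]; simp
        exact this
      · intro z hz
        have : z ∈ G.neighborSet x := hz
        rw [hset] at this
        simp at this
        tauto
  -- extract the second neighbor of y
  obtain ⟨b, hyb, hbx, hny⟩ :
      ∃ b, G.Adj y b ∧ b ≠ x ∧ (∀ z, G.Adj y z → z = x ∨ z = b) := by
    obtain ⟨u, v, huv, hset⟩ := Set.ncard_eq_two.mp hdy
    have hx' : x ∈ G.neighborSet y := hxy.symm
    rw [hset] at hx'
    simp only [Set.mem_insert_iff, Set.mem_singleton_iff] at hx'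
    rcases hx' with rfl | rfl
    · refine ⟨v, ?_, huv.symm, ?_⟩
      · have : v ∈ G.neighborSet y := by rw [hset]; simp
        exact this
      · intro z hz
        have : z ∈ G.neighborSet y := hz
        rw [hset] at this
        simpa using this
    · refine ⟨u, ?_, huv, ?_⟩
      · have : u ∈ G.neighborSet y := by rw [hset]; simp
        exact this
      · intro z hz
        have : z ∈ G.neighborSet y := hz
        rw [hset] at this
        simp at this
        tauto
  -- no triangle through x y : y is not adjacent to a
  have hya : ¬ G.Adj y a := fun had => h3 (cycle3 hxy had hxa.symm)
  have hab : a ≠ b := fun h => hya (h ▸ hyb)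
  have hnab : ¬ G.Adj a b := fun h =>
    h4 (cycle4 hxy hyb h.symm hxa.symm hbx.symm hay.symm)
  -- the 5-cycle gives a common neighbor of a and b
  obtain ⟨c, hac, hcb⟩ := c5_extract hnx hny h5
  have dab : G.dist a b = 2 := by
    refine le_antisymm ?_ (two_le_dist_s6 hconn hab hnab)
    simpa using SimpleGraph.dist_le (SimpleGraph.Walk.cons hac
      (SimpleGraph.Walk.cons hcb SimpleGraph.Walk.nil))
  have day : 2 ≤ G.dist a y := two_le_dist_s6 hconn hay (fun h => hya h.symm)
  -- the curvature ratio is eventually 1/2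
  have key : ∀ α ∈ Set.Ioo (1/2 : ℝ) 1, kappaAlpha G α x y / (1 - α) = 1/2 := by
    intro α hα
    have h1 : (1:ℝ) - α ≠ 0 := by
      have := hα.2
      intro h
      simp only [Set.mem_Ioo] at hα
      linarith [hα.2]
    rw [kappaAlpha, W_eq_s6 hconn hxy hxa hyb hdx hdy hnx hny hay hbx hab dab day hα]
    field_simp
    ring
  have heq : (fun α => kappaAlpha G α x y / (1 - α)) =ᶠ[𝓝[<] (1:ℝ)]
      (fun _ => (1/2 : ℝ)) := by
    filter_upwards [Ioo_mem_nhdsLT (by norm_num : (1/2:ℝ) < 1)] with α hα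
    exact key α hα
  have htend : Filter.Tendsto (fun α => kappaAlpha G α x y / (1 - α))
      (𝓝[<] (1:ℝ)) (𝓝 (1/2 : ℝ)) :=
    Filter.Tendsto.congr' heq.symm tendsto_const_nhds
  have hval : ricci G x y = 1/2 := htend.limUnder_eq
  rw [hval]
  norm_num

end RicciFlatPaper

end
end
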